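/- arXiv:math/0702063 — 3 statements merged into one kernel-verified Lean document; each statement's English description precedes it below -/
import Mathlib

section
/- Let φ : ℝ → ℝ be smooth, x : [0,1] → ℝ smooth, ε₀ > 0, u : [0,1] → ℝ the constant function ε₀, and z : [0,1] → ℝ smooth. Then the function v = ε₀ · (φ' ∘ (x+z) - φ' ∘ x) satisfies: for every s₀ ∈ [0,1] with z(s₀) = 0, and every k ∈ ℕ, v^{(k)}(s₀) = ε₀ · (φ''(x(s₀)) · z^{(k)}(s₀) + T(s₀)) where |T(s₀)| is bounded by a quantity depending only on sup norms of x^{(i)} (i ≤ k), of z^{(i)} for i ≤ k-1, and on sup norms of derivatives of φ on a compact set containing rng x + [-1,1], provided sup|z| ≤ 1. -/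
open Real Set Function
open scoped ContDiff Pointwise

namespace Stmt5Aux

/-- All single increments of a list of naturals. -/
def incr : List ℕ → List (List ℕ)
  | [] => []
  | a :: as => ((a+1) :: as) :: (incr as).map (fun bs => a :: bs)

/-- Formal derivative of a monomial `(m, as)` representing
`h^(m)(u s) * ∏ u^(a)(s)`. -/
def dM (p : ℕ × List ℕ) : List (ℕ × List ℕ) :=
  (p.1 + 1, 1 :: p.2) :: (incr p.2).map (fun bs => (p.1, bs))

noncomputable def pEval (u : ℝ → ℝ) (as : List ℕ) (s : ℝ) : ℝ :=
  (as.map (fun a => iteratedDeriv a u s)).prod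

noncomputable def mEval (h u : ℝ → ℝ) (p : ℕ × List ℕ) (s : ℝ) : ℝ :=
  iteratedDeriv p.1 h (u s) * pEval u p.2 s

noncomputable def lEval (h u : ℝ → ℝ) (L : List (ℕ × List ℕ)) (s : ℝ) : ℝ :=
  (L.map (fun p => mEval h u p s)).sum

lemma incr_mem {as bs : List ℕ} (hb : bs ∈ incr as) :
    bs.length = as.length ∧ ∀ b ∈ bs, ∃ a ∈ as, b ≤ a + 1 := by
  induction as generalizing bs with
  | nil => simp [incr] at hb
  | cons a as ih =>
    simp only [incr, List.mem_cons, List.mem_map] at hb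
    rcases hb with rfl | ⟨cs, hcs, rfl⟩
    · refine ⟨by simp, ?_⟩
      intro b hb
      rcases List.mem_cons.mp hb with rfl | hb
      · exact ⟨a, by simp⟩
      · exact ⟨b, List.mem_cons_of_mem _ hb, by omega⟩
    · obtain ⟨hlen, hmem⟩ := ih hcs
      refine ⟨by simp [hlen], ?_⟩
      intro b hb
      rcases List.mem_cons.mp hb with rfl | hb
      · exact ⟨b, by simp, by omega⟩
      · obtain ⟨a', ha', hba'⟩ := hmem b hb
        exact ⟨a', List.mem_cons_of_mem _ ha', hba'⟩

lemma hasDerivAt_iteratedDeriv {u : ℝ → ℝ} (hu : ContDiff ℝ ∞ u) (a : ℕ) (s : ℝ) :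
    HasDerivAt (iteratedDeriv a u) (iteratedDeriv (a+1) u s) s := by
  have hd : Differentiable ℝ (iteratedDeriv a u) :=
    hu.differentiable_iteratedDeriv a (by exact_mod_cast WithTop.coe_lt_top _)
  have := (hd s).hasDerivAt
  rwa [show deriv (iteratedDeriv a u) s = iteratedDeriv (a+1) u s by
    rw [iteratedDeriv_succ]] at this

lemma pEval_cons (u : ℝ → ℝ) (a : ℕ) (as : List ℕ) (s : ℝ) :
    pEval u (a :: as) s = iteratedDeriv a u s * pEval u as s := by
  simp [pEval]

lemma sum_incr_cons (u : ℝ → ℝ) (a : ℕ) (as : List ℕ) (s : ℝ) :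
    ((incr (a :: as)).map (fun bs => pEval u bs s)).sum
      = iteratedDeriv (a+1) u s * pEval u as s
        + iteratedDeriv a u s * ((incr as).map (fun bs => pEval u bs s)).sum := by
  simp only [incr, List.map_cons, List.sum_cons, List.map_map, Function.comp_def, pEval_cons]
  rw [List.sum_map_mul_left]

lemma pEval_hasDerivAt {u : ℝ → ℝ} (hu : ContDiff ℝ ∞ u) (as : List ℕ) (s : ℝ) :
    HasDerivAt (pEval u as) (((incr as).map (fun bs => pEval u bs s)).sum) s := by
  induction as with
  | nil =>
    have e : pEval u [] = fun _ => (1:ℝ) := by funext t; simp [pEval]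
    rw [e]; simpa [incr] using hasDerivAt_const s (1 : ℝ)
  | cons a as ih =>
    have h1 := hasDerivAt_iteratedDeriv hu a s
    have hmul := h1.mul ih
    have hfun : (fun t => iteratedDeriv a u t * pEval u as t) = pEval u (a :: as) := by
      funext t; rw [pEval_cons]
    rw [show (iteratedDeriv a u * pEval u as) = pEval u (a :: as) from hfun] at hmul
    rw [sum_incr_cons]
    exact hmul

lemma lEval_dM (h u : ℝ → ℝ) (m : ℕ) (as : List ℕ) (s : ℝ) :
    lEval h u (dM (m, as)) s
      = (iteratedDeriv (m+1) h (u s) * iteratedDeriv 1 u s) * pEval u as s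
        + iteratedDeriv m h (u s) * ((incr as).map (fun bs => pEval u bs s)).sum := by
  simp only [dM, lEval, List.map_cons, List.sum_cons, List.map_map, Function.comp_def,
    mEval, pEval_cons]
  rw [List.sum_map_mul_left]
  ring_nf

lemma mEval_hasDerivAt {h u : ℝ → ℝ} (hh : ContDiff ℝ ∞ h) (hu : ContDiff ℝ ∞ u)
    (p : ℕ × List ℕ) (s : ℝ) :
    HasDerivAt (mEval h u p) (lEval h u (dM p) s) s := by
  obtain ⟨m, as⟩ := p
  have hu1 : HasDerivAt u (iteratedDeriv 1 u s) s := by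
    simpa using hasDerivAt_iteratedDeriv hu 0 s
  have hcomp : HasDerivAt (fun t => iteratedDeriv m h (u t))
      (iteratedDeriv (m+1) h (u s) * iteratedDeriv 1 u s) s := by
    simpa [Function.comp_def] using (hasDerivAt_iteratedDeriv hh m (u s)).comp s hu1
  have hmul := hcomp.mul (pEval_hasDerivAt hu as s)
  rw [lEval_dM]
  exact hmul

lemma lEval_hasDerivAt {h u : ℝ → ℝ} (hh : ContDiff ℝ ∞ h) (hu : ContDiff ℝ ∞ u)
    (L : List (ℕ × List ℕ)) (s : ℝ) :
    HasDerivAt (lEval h u L) (lEval h u (L.flatMap dM) s) s := by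
  induction L with
  | nil =>
    have e : lEval h u [] = fun _ => (0:ℝ) := by funext t; simp [lEval]
    rw [e]; simpa [lEval] using hasDerivAt_const s (0 : ℝ)
  | cons p L ih =>
    have := (mEval_hasDerivAt hh hu p s).add ih
    have hfun : (fun t => mEval h u p t + lEval h u L t) = lEval h u (p :: L) := by
      funext t; simp [lEval]
    rw [show (mEval h u p + lEval h u L) = lEval h u (p :: L) from hfun] at this
    refine HasDerivAt.congr_deriv this ?_
    simp [lEval, List.flatMap_cons, List.map_append, List.sum_append]

/-- Faà di Bruno style structural lemma: the `k`-th derivative of `h ∘ u` is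
`h'(u) * u^(k)` plus a universal sum of monomials involving only derivatives of
`u` of order `< k`. -/
lemma faa {h : ℝ → ℝ} (hh : ContDiff ℝ ∞ h) (k : ℕ) (hk : 1 ≤ k) :
    ∃ L : List (ℕ × List ℕ),
      (∀ p ∈ L, p.1 ≤ k ∧ p.2.length ≤ k ∧ ∀ a ∈ p.2, a + 1 ≤ k) ∧
      ∀ u : ℝ → ℝ, ContDiff ℝ ∞ u → ∀ s : ℝ,
        iteratedDeriv k (fun t => h (u t)) s
          = deriv h (u s) * iteratedDeriv k u s + lEval h u L s := by
  induction k, hk using Nat.le_induction with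
  | base =>
    refine ⟨[], by simp, ?_⟩
    intro u hu s
    have hu1 : HasDerivAt u (deriv u s) s :=
      ((hu.differentiable (by simp)) s).hasDerivAt
    have hh1 : HasDerivAt h (deriv h (u s)) (u s) :=
      ((hh.differentiable (by simp)) (u s)).hasDerivAt
    have hder : deriv (fun t => h (u t)) s = deriv h (u s) * deriv u s := by
      simpa [Function.comp_def] using (hh1.comp s hu1).deriv
    simp [iteratedDeriv_one, lEval, hder]
  | succ k hk ih =>
    obtain ⟨L, hLcond, hLid⟩ := ih
    refine ⟨(2, [1, k]) :: L.flatMap dM, ?_, ?_⟩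
    · intro p hp
      rcases List.mem_cons.mp hp with rfl | hp
      · refine ⟨by omega, by simp; omega, ?_⟩
        intro a ha
        rcases List.mem_cons.mp ha with rfl | ha
        · omega
        · simp at ha; omega
      · obtain ⟨q, hq, hpq⟩ := List.mem_flatMap.mp hp
        obtain ⟨hq1, hq2, hq3⟩ := hLcond q hq
        rcases List.mem_cons.mp hpq with rfl | hpq
        · refine ⟨by omega, by simp; omega, ?_⟩
          intro a ha
          rcases List.mem_cons.mp ha with rfl | ha
          · omega
          · exact Nat.le_succ_of_le (hq3 a ha)
        · obtain ⟨bs, hbs, rfl⟩ := List.mem_map.mp hpq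
          obtain ⟨hlen, hmem⟩ := incr_mem hbs
          refine ⟨by omega, by simp [hlen]; omega, ?_⟩
          intro a ha
          obtain ⟨a', ha', haa'⟩ := hmem a ha
          have := hq3 a' ha'
          omega
    · intro u hu s
      have heq : iteratedDeriv k (fun t => h (u t))
          = fun t => deriv h (u t) * iteratedDeriv k u t + lEval h u L t :=
        funext (hLid u hu)
      rw [iteratedDeriv_succ, heq]
      have hu1 : HasDerivAt u (iteratedDeriv 1 u s) s := by
        simpa using hasDerivAt_iteratedDeriv hu 0 s
      have hcomp : HasDerivAt (fun t => deriv h (u t))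
          (iteratedDeriv 2 h (u s) * iteratedDeriv 1 u s) s := by
        have h1 : HasDerivAt (iteratedDeriv 1 h) (iteratedDeriv 2 h (u s)) (u s) :=
          hasDerivAt_iteratedDeriv hh 1 (u s)
        simpa [Function.comp_def, iteratedDeriv_one] using h1.comp s hu1
      have hmain : HasDerivAt (fun t => deriv h (u t) * iteratedDeriv k u t)
          (iteratedDeriv 2 h (u s) * iteratedDeriv 1 u s * iteratedDeriv k u s
            + deriv h (u s) * iteratedDeriv (k+1) u s) s :=
        hcomp.mul (hasDerivAt_iteratedDeriv hu k s)
      have hsum := hmain.add (lEval_hasDerivAt hh hu L s)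
      rw [show (fun t => deriv h (u t) * iteratedDeriv k u t + lEval h u L t) = ((fun t => deriv h (u t) * iteratedDeriv k u t) + lEval h u L) from rfl, hsum.deriv]
      simp only [lEval, List.map_cons, List.sum_cons]
      simp [mEval, pEval]
      ring

lemma pEval_bound {u : ℝ → ℝ} {as : List ℕ} {k : ℕ} {D : ℝ} (hD : 1 ≤ D) {s : ℝ}
    (hub : ∀ a, a + 1 ≤ k → |iteratedDeriv a u s| ≤ D)
    (hmem : ∀ a ∈ as, a + 1 ≤ k) :
    |pEval u as s| ≤ D ^ as.length := by
  induction as with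
  | nil => simp [pEval]
  | cons a as ih =>
    have h1 : |iteratedDeriv a u s| ≤ D := hub a (hmem a (by simp))
    have h2 := ih (fun b hb => hmem b (List.mem_cons_of_mem _ hb))
    calc |pEval u (a :: as) s| = |iteratedDeriv a u s| * |pEval u as s| := by
          simp [pEval, abs_mul]
      _ ≤ D * D ^ as.length := by
          exact mul_le_mul h1 h2 (abs_nonneg _) (le_trans zero_le_one hD)
      _ = D ^ (a :: as).length := by simp [pow_succ]; ring

lemma lEval_bound {h u : ℝ → ℝ} {L : List (ℕ × List ℕ)} {k : ℕ} {H D : ℝ}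
    (hH : 0 ≤ H) (hD : 1 ≤ D) {s : ℝ}
    (hcond : ∀ p ∈ L, p.1 ≤ k ∧ p.2.length ≤ k ∧ ∀ a ∈ p.2, a + 1 ≤ k)
    (hhb : ∀ m ≤ k, |iteratedDeriv m h (u s)| ≤ H)
    (hub : ∀ a, a + 1 ≤ k → |iteratedDeriv a u s| ≤ D) :
    |lEval h u L s| ≤ L.length * (H * D ^ k) := by
  induction L with
  | nil => simp [lEval]
  | cons p L ih =>
    obtain ⟨hp1, hp2, hp3⟩ := hcond p (by simp)
    have hmb : |mEval h u p s| ≤ H * D ^ k := by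
      have h1 : |iteratedDeriv p.1 h (u s)| ≤ H := hhb p.1 hp1
      have h2 : |pEval u p.2 s| ≤ D ^ p.2.length := pEval_bound hD hub hp3
      have h3 : D ^ p.2.length ≤ D ^ k := pow_le_pow_right₀ hD hp2
      calc |mEval h u p s| = |iteratedDeriv p.1 h (u s)| * |pEval u p.2 s| := by
            simp [mEval, abs_mul]
        _ ≤ H * D ^ k :=
            mul_le_mul h1 (h2.trans h3) (abs_nonneg _) hH
    have ihb := ih (fun q hq => hcond q (List.mem_cons_of_mem _ hq))
    calc |lEval h u (p :: L) s| ≤ |mEval h u p s| + |lEval h u L s| := by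
          simp only [lEval, List.map_cons, List.sum_cons]; exact abs_add_le _ _
      _ ≤ H * D ^ k + L.length * (H * D ^ k) := add_le_add hmb ihb
      _ = (p :: L).length * (H * D ^ k) := by simp; ring

lemma iteratedDeriv_add' {f g : ℝ → ℝ} {n : ℕ} (hf : ContDiff ℝ n f) (hg : ContDiff ℝ n g)
    (x : ℝ) :
    iteratedDeriv n (fun s => f s + g s) x = iteratedDeriv n f x + iteratedDeriv n g x := by
  rw [← iteratedDerivWithin_univ, ← iteratedDerivWithin_univ, ← iteratedDerivWithin_univ]
  exact iteratedDerivWithin_add (Set.mem_univ x) uniqueDiffOn_univ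
    hf.contDiffAt.contDiffWithinAt hg.contDiffAt.contDiffWithinAt

lemma iteratedDeriv_sub' {f g : ℝ → ℝ} {n : ℕ} (hf : ContDiff ℝ n f) (hg : ContDiff ℝ n g)
    (x : ℝ) :
    iteratedDeriv n (fun s => f s - g s) x = iteratedDeriv n f x - iteratedDeriv n g x := by
  rw [← iteratedDerivWithin_univ, ← iteratedDerivWithin_univ, ← iteratedDerivWithin_univ]
  exact iteratedDerivWithin_sub (Set.mem_univ x) uniqueDiffOn_univ
    hf.contDiffAt.contDiffWithinAt hg.contDiffAt.contDiffWithinAt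

lemma iteratedDeriv_const_mul' {f : ℝ → ℝ} {n : ℕ} (hf : ContDiff ℝ n f) (c : ℝ) (x : ℝ) :
    iteratedDeriv n (fun s => c * f s) x = c * iteratedDeriv n f x := by
  rw [← iteratedDerivWithin_univ, ← iteratedDerivWithin_univ]
  exact iteratedDerivWithin_const_mul (Set.mem_univ x) uniqueDiffOn_univ c hf.contDiffAt.contDiffWithinAt

end Stmt5Aux

open Stmt5Aux in
/-- For smooth `φ`, and `v = ε₀ * (φ' ∘ (x+z) - φ' ∘ x)`, at every
`s₀ ∈ [0,1]` with `z s₀ = 0` we have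
`v^{(k)}(s₀) = ε₀ * (φ''(x s₀) * z^{(k)}(s₀) + T s₀)` where `|T s₀| ≤ M` for a
bound `M` depending only on `φ`, a compact set `K` containing `rng x`,
`k`, and the bound `C` on the derivatives `x^{(i)}` (`i ≤ k`) and
`z^{(i)}` (`i ≤ k-1`), provided `sup |z| ≤ 1`. -/
theorem stmt5 (φ : ℝ → ℝ) (hφ : ContDiff ℝ (⊤ : ℕ∞) φ)
    (K : Set ℝ) (hK : IsCompact K) (k : ℕ) (C : ℝ) (hC : 0 < C) :
    ∃ M > 0, ∀ x z : ℝ → ℝ, ContDiff ℝ (⊤ : ℕ∞) x → ContDiff ℝ (⊤ : ℕ∞) z →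
      (∀ s ∈ Set.Icc (0 : ℝ) 1, x s ∈ K) →
      (∀ i ≤ k, ∀ s ∈ Set.Icc (0 : ℝ) 1, |iteratedDeriv i x s| ≤ C) →
      (∀ i ≤ k - 1, ∀ s ∈ Set.Icc (0 : ℝ) 1, |iteratedDeriv i z s| ≤ C) →
      (∀ s ∈ Set.Icc (0 : ℝ) 1, |z s| ≤ 1) →
      ∀ ε₀ > (0 : ℝ), ∀ s₀ ∈ Set.Icc (0 : ℝ) 1, z s₀ = 0 →
        ∃ T : ℝ, |T| ≤ M ∧
          iteratedDeriv k (fun s => ε₀ * (deriv φ (x s + z s) - deriv φ (x s))) s₀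
            = ε₀ * (deriv (deriv φ) (x s₀) * iteratedDeriv k z s₀ + T) := by
  have hphi : ContDiff ℝ ∞ φ := hφ.of_le (by simp)
  have hh : ContDiff ℝ ∞ (deriv φ) := (contDiff_infty_iff_deriv.mp hphi).2
  set h : ℝ → ℝ := deriv φ with hhdef
  -- the compact set K' = K + [-1,1] and a bound H for |h^(m)| on it, m ≤ k
  set K' : Set ℝ := K + Set.Icc (-1 : ℝ) 1 with hK'def
  have hK' : IsCompact K' := hK.add isCompact_Icc
  obtain ⟨B, hB⟩ := hK'.exists_bound_of_continuousOn
    (f := fun y => ∑ m ∈ Finset.range (k+1), |iteratedDeriv m h y|)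
    (Continuous.continuousOn (by
      apply continuous_finset_sum
      intro m _
      exact (hh.continuous_iteratedDeriv m (by first | exact_mod_cast le_top | norm_cast)).abs))
  set H : ℝ := max B 0 with hHdef
  have hH0 : 0 ≤ H := le_max_right _ _
  have hHb : ∀ m ≤ k, ∀ y ∈ K', |iteratedDeriv m h y| ≤ H := by
    intro m hm y hy
    have h1 : |iteratedDeriv m h y| ≤ ∑ j ∈ Finset.range (k+1), |iteratedDeriv j h y| :=
      Finset.single_le_sum (f := fun j => |iteratedDeriv j h y|)
        (fun j _ => abs_nonneg _) (Finset.mem_range.mpr (by omega))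
    have h2 := hB y hy
    rw [Real.norm_eq_abs] at h2
    have h3 : ∑ j ∈ Finset.range (k+1), |iteratedDeriv j h y| ≤ B :=
      (le_abs_self _).trans h2
    exact h1.trans (h3.trans (le_max_left _ _))
  -- case split on k
  rcases Nat.eq_zero_or_pos k with rfl | hk
  · refine ⟨1, one_pos, ?_⟩
    intro x z hx hz hxK hxb hzb hz1 ε₀ hε₀ s₀ hs₀ hz0
    refine ⟨0, by norm_num, ?_⟩
    simp [iteratedDeriv_zero, hz0]
  · obtain ⟨L, hLcond, hLid⟩ := faa hh k hk
    set D : ℝ := 2 * C + 1 with hDdef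
    have hD1 : 1 ≤ D := by nlinarith
    refine ⟨L.length * (H * D ^ k) * 2 + 1, by positivity, ?_⟩
    intro x z hx hz hxK hxb hzb hz1 ε₀ hε₀ s₀ hs₀ hz0
    have hxi : ContDiff ℝ ∞ x := hx.of_le (by simp)
    have hzi : ContDiff ℝ ∞ z := hz.of_le (by simp)
    have hwi : ContDiff ℝ ∞ (fun s => x s + z s) := hxi.add hzi
    -- membership in K'
    have hxK' : ∀ s ∈ Set.Icc (0:ℝ) 1, x s ∈ K' := by
      intro s hs
      have : x s = x s + 0 := by ring
      rw [this]
      exact Set.add_mem_add (hxK s hs) (by norm_num)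
    have hwK' : ∀ s ∈ Set.Icc (0:ℝ) 1, x s + z s ∈ K' := by
      intro s hs
      exact Set.add_mem_add (hxK s hs) (abs_le.mp (hz1 s hs))
    -- derivative bounds at s₀
    have hxD : ∀ a, a + 1 ≤ k → |iteratedDeriv a x s₀| ≤ D := by
      intro a ha
      have := hxb a (by omega) s₀ hs₀
      nlinarith
    have hzD : ∀ a, a + 1 ≤ k → |iteratedDeriv a z s₀| ≤ C := by
      intro a ha
      exact hzb a (by omega) s₀ hs₀
    have hwD : ∀ a, a + 1 ≤ k → |iteratedDeriv a (fun s => x s + z s) s₀| ≤ D := by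
      intro a ha
      rw [iteratedDeriv_add' (hx.of_le (by exact_mod_cast le_top)) (hz.of_le (by exact_mod_cast le_top))]
      have h1 := hxb a (by omega) s₀ hs₀
      have h2 := hzD a ha
      calc |iteratedDeriv a x s₀ + iteratedDeriv a z s₀|
          ≤ |iteratedDeriv a x s₀| + |iteratedDeriv a z s₀| := abs_add_le _ _
        _ ≤ D := by nlinarith
    -- the error term
    refine ⟨lEval h (fun s => x s + z s) L s₀ - lEval h x L s₀, ?_, ?_⟩
    · have hb1 : |lEval h (fun s => x s + z s) L s₀| ≤ L.length * (H * D ^ k) :=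
        lEval_bound hH0 hD1 hLcond
          (fun m hm => hHb m hm _ (hwK' s₀ hs₀)) hwD
      have hb2 : |lEval h x L s₀| ≤ L.length * (H * D ^ k) :=
        lEval_bound hH0 hD1 hLcond
          (fun m hm => hHb m hm _ (hxK' s₀ hs₀)) hxD
      calc |lEval h (fun s => x s + z s) L s₀ - lEval h x L s₀|
          ≤ |lEval h (fun s => x s + z s) L s₀| + |lEval h x L s₀| := abs_sub _ _
        _ ≤ L.length * (H * D ^ k) * 2 := by linarith
        _ ≤ L.length * (H * D ^ k) * 2 + 1 := by linarith
    · -- the identity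
      have hA : ContDiff ℝ (k : ℕ) (fun s => h (x s + z s) - h (x s)) :=
        ((hh.comp hwi).sub (hh.comp hxi)).of_le (by first | exact_mod_cast le_top | norm_cast)
      have e1 : iteratedDeriv k (fun s => ε₀ * (h (x s + z s) - h (x s))) s₀
          = ε₀ * iteratedDeriv k (fun s => h (x s + z s) - h (x s)) s₀ :=
        iteratedDeriv_const_mul' hA ε₀ s₀
      have e2 : iteratedDeriv k (fun s => h (x s + z s) - h (x s)) s₀
          = iteratedDeriv k (fun s => h (x s + z s)) s₀
            - iteratedDeriv k (fun s => h (x s)) s₀ :=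
        iteratedDeriv_sub' ((hh.comp hwi).of_le (by first | exact_mod_cast le_top | norm_cast))
          ((hh.comp hxi).of_le (by first | exact_mod_cast le_top | norm_cast)) s₀
    
      have e3 := hLid (fun s => x s + z s) hwi s₀
      have e4 := hLid x hxi s₀
      have e5 : iteratedDeriv k (fun s => x s + z s) s₀
          = iteratedDeriv k x s₀ + iteratedDeriv k z s₀ :=
        iteratedDeriv_add' (hx.of_le (by exact_mod_cast le_top)) (hz.of_le (by exact_mod_cast le_top)) s₀
      have hws : x s₀ + z s₀ = x s₀ := by rw [hz0, add_zero]
      rw [e1, e2, e3, e4, e5, hws]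
      ring
end

section
/- Let φ : ℝ → ℝ be a smooth diffeomorphism and E = C^∞([0,1], ℝ) the Fréchet space of smooth functions on [0,1] with seminorms p_i(u) = sup{|u^{(l)}(s)| : s ∈ [0,1], l ≤ i}. Define f : E → E by f(x) = φ ∘ x, with Gateaux derivative δf(x,u) = (φ' ∘ x) · u. Suppose f is almost M-tame at some x ∈ E, i.e., there exist P-norms ‖·‖₁, ‖·‖₂ for E such that ‖z‖₁ ≤ 1 implies ‖δf(x+z,u) − δf(x,u)‖₂ ≤ ‖u‖₁ for all u ∈ E. Then φ''(t) = 0 for every t in the range of x. -/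
open Real Set Function Filter

/-- The Fréchet space `E = C^∞([0,1], ℝ)`, realized as the submodule of smooth
functions `ℝ → ℝ` (a smooth function on `[0,1]` being a restriction of such). -/
def SmoothI : Submodule ℝ (ℝ → ℝ) where
  carrier := {u | ContDiff ℝ (⊤ : ℕ∞) u}
  add_mem' := fun hu hv => by
    simp only [Set.mem_setOf_eq] at *; exact hu.add hv
  zero_mem' := by
    simp only [Set.mem_setOf_eq]; exact contDiff_const
  smul_mem' := fun c u hu => by
    simp only [Set.mem_setOf_eq] at *; exact hu.const_smul c

/-- The seminorms `p_i u = sup { |u^{(l)} s| : s ∈ [0,1], l ≤ i }`. -/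
noncomputable def pI (i : ℕ) (u : ℝ → ℝ) : ℝ :=
  ⨆ q : {l : ℕ // l ≤ i} × Set.Icc (0 : ℝ) 1, |iteratedDeriv q.1.1 u q.2.1|

namespace Stmt7Aux

lemma smooth_shift {F : ℝ → ℝ} (hF : ContDiff ℝ (⊤ : ℕ∞) F) (h : ℝ) :
    ContDiff ℝ (⊤ : ℕ∞) (fun s => F (s + h)) :=
  hF.comp (contDiff_id.add contDiff_const)

lemma diff_itd {F : ℝ → ℝ} (hF : ContDiff ℝ (⊤ : ℕ∞) F) (n : ℕ) :
    Differentiable ℝ (iteratedDeriv n F) :=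
  hF.differentiable_iteratedDeriv n (by exact_mod_cast ENat.coe_lt_top n)

lemma iteratedDeriv_sub' {F G : ℝ → ℝ} (n : ℕ) (hf : ContDiff ℝ (⊤ : ℕ∞) F) (hg : ContDiff ℝ (⊤ : ℕ∞) G) :
    iteratedDeriv n (fun s => F s - G s) = fun s => iteratedDeriv n F s - iteratedDeriv n G s := by
  induction n with
  | zero => simp [iteratedDeriv_zero]
  | succ n ih =>
    rw [iteratedDeriv_succ, ih, iteratedDeriv_succ, iteratedDeriv_succ]
    funext s
    exact deriv_sub ((diff_itd hf n).differentiableAt) ((diff_itd hg n).differentiableAt)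

noncomputable def Dh (h : ℝ) (F : ℝ → ℝ) : ℝ → ℝ := fun s => F (s + h) - F s

lemma Dh_smooth {F : ℝ → ℝ} (hF : ContDiff ℝ (⊤ : ℕ∞) F) (h : ℝ) : ContDiff ℝ (⊤ : ℕ∞) (Dh h F) :=
  (smooth_shift hF h).sub hF

lemma iteratedDeriv_Dh {F : ℝ → ℝ} (hF : ContDiff ℝ (⊤ : ℕ∞) F) (h : ℝ) (j : ℕ) :
    iteratedDeriv j (Dh h F) = fun τ => iteratedDeriv j F (τ + h) - iteratedDeriv j F τ := by
  unfold Dh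
  rw [iteratedDeriv_sub' j (smooth_shift hF h) hF, iteratedDeriv_comp_add_const]

lemma Dh_iter_add (h : ℝ) (j : ℕ) :
    ∀ F G : ℝ → ℝ, (Dh h)^[j] (fun s => F s + G s) = fun s => (Dh h)^[j] F s + (Dh h)^[j] G s := by
  induction j with
  | zero => intro F G; simp
  | succ j ih =>
    intro F G
    rw [Function.iterate_succ_apply, Function.iterate_succ_apply (f := Dh h) (n := j) (x := F),
      Function.iterate_succ_apply (f := Dh h) (n := j) (x := G)]
    rw [show Dh h (fun s => F s + G s) = fun s => Dh h F s + Dh h G s by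
      funext s; simp [Dh]; ring]
    exact ih _ _

lemma Dh_iter_antiper (h : ℝ) (j : ℕ) :
    ∀ F : ℝ → ℝ, (∀ s, F (s + h) = -F s) →
      (Dh h)^[j] F = fun s => (-2 : ℝ) ^ j * F s := by
  induction j with
  | zero => intro F _; funext s; simp
  | succ j ih =>
    intro F hF
    rw [Function.iterate_succ_apply]
    have h1 : Dh h F = fun s => (-2 : ℝ) * F s := by
      funext s; simp [Dh, hF s]; ring
    rw [h1, ih _ (by intro s; simp [hF s])]
    funext s
    rw [pow_succ]
    ring

lemma Dh_iter_bound (h : ℝ) (hh : 0 ≤ h) (p : ℝ) :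
    ∀ (j : ℕ) (F : ℝ → ℝ) (B q : ℝ), (∀ τ ∈ Icc p q, |F τ| ≤ B) →
      ∀ s, p ≤ s → s + j * h ≤ q → |(Dh h)^[j] F s| ≤ 2 ^ j * B := by
  intro j
  induction j with
  | zero =>
    intro F B q hB s hp hq
    simpa using hB s ⟨hp, by simpa using hq⟩
  | succ j ih =>
    intro F B q hB s hp hq
    rw [Function.iterate_succ_apply]
    have key : ∀ τ ∈ Icc p (q - h), |Dh h F τ| ≤ 2 * B := by
      intro τ hτ
      have h1 := hB (τ + h) ⟨by linarith [hτ.1], by linarith [hτ.2]⟩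
      have h2 := hB τ ⟨hτ.1, by linarith [hτ.2]⟩
      calc |Dh h F τ| ≤ |F (τ + h)| + |F τ| := abs_sub _ _
        _ ≤ 2 * B := by linarith
    have := ih (Dh h F) (2 * B) (q - h) key s hp (by push_cast at hq ⊢; linarith)
    calc |(Dh h)^[j] (Dh h F) s| ≤ 2 ^ j * (2 * B) := this
      _ = 2 ^ (j + 1) * B := by ring

lemma Dh_iter_deriv_bound (h : ℝ) (hh : 0 ≤ h) (p : ℝ) :
    ∀ (j : ℕ) (F : ℝ → ℝ), ContDiff ℝ (⊤ : ℕ∞) F → ∀ (B q : ℝ),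
      (∀ τ ∈ Icc p q, |iteratedDeriv j F τ| ≤ B) →
      ∀ s, p ≤ s → s + j * h ≤ q → |(Dh h)^[j] F s| ≤ h ^ j * B := by
  intro j
  induction j with
  | zero =>
    intro F _ B q hB s hp hq
    simpa using hB s ⟨hp, by simpa using hq⟩
  | succ j ih =>
    intro F hF B q hB s hp hq
    rw [Function.iterate_succ_apply]
    have key : ∀ τ ∈ Icc p (q - h), |iteratedDeriv j (Dh h F) τ| ≤ h * B := by
      intro τ hτ
      rw [iteratedDeriv_Dh hF h j]
      have hmvt := Convex.norm_image_sub_le_of_norm_deriv_le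
        (f := iteratedDeriv j F) (s := Icc p q)
        (fun y _ => (diff_itd hF j).differentiableAt)
        (fun y hy => by
          rw [← iteratedDeriv_succ]
          simpa [Real.norm_eq_abs] using hB y hy)
        (convex_Icc p q) (x := τ) (y := τ + h)
        ⟨hτ.1, by linarith [hτ.2]⟩ ⟨by linarith [hτ.1], by linarith [hτ.2]⟩
      simpa [Real.norm_eq_abs, abs_of_nonneg hh, mul_comm] using hmvt
    have := ih (Dh h F) (Dh_smooth hF h) (h * B) (q - h) key s hp
      (by push_cast at hq ⊢; linarith)
    calc |(Dh h)^[j] (Dh h F) s| ≤ h ^ j * (h * B) := this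
      _ = h ^ (j + 1) * B := by ring

lemma smooth_sin_lin (a b θ : ℝ) : ContDiff ℝ (⊤ : ℕ∞) (fun s => a * Real.sin (b * s + θ)) :=
  contDiff_const.mul
    (Real.contDiff_sin.comp ((contDiff_const.mul contDiff_id).add contDiff_const))

lemma itd_sin_lin (a b θ : ℝ) : ∀ n : ℕ,
    iteratedDeriv n (fun s => a * Real.sin (b * s + θ)) =
      fun s => a * b ^ n * Real.sin (b * s + θ + n * (π / 2)) := by
  intro n
  induction n with
  | zero => funext s; simp
  | succ n ih =>
    rw [iteratedDeriv_succ, ih]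
    funext s
    have h1 : HasDerivAt (fun y : ℝ => b * y + θ + n * (π / 2)) b s := by
      simpa using (((hasDerivAt_id s).const_mul b).add_const θ).add_const (n * (π / 2))
    have h2 : HasDerivAt (fun y : ℝ => Real.sin (b * y + θ + n * (π / 2)))
        (Real.cos (b * s + θ + n * (π / 2)) * b) s :=
      (Real.hasDerivAt_sin _).comp s h1
    have h3 : HasDerivAt (fun y : ℝ => a * b ^ n * Real.sin (b * y + θ + n * (π / 2)))
        (a * b ^ n * (Real.cos (b * s + θ + n * (π / 2)) * b)) s := h2.const_mul _
    rw [h3.deriv]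
    have harg : b * s + θ + (↑(n + 1) : ℝ) * (π / 2) = b * s + θ + n * (π / 2) + π / 2 := by
      push_cast; ring
    rw [harg, Real.sin_add_pi_div_two]
    ring

lemma abs_sin_half_add : ∀ n : ℕ, |Real.sin (π/2 + n * π)| = 1 := by
  intro n
  induction n with
  | zero => simp
  | succ n ih =>
    have he : π/2 + (↑(n+1):ℝ) * π = (π/2 + n*π) + π := by push_cast; ring
    rw [he, Real.sin_add_pi, abs_neg, ih]

lemma itd_const_pos (c : ℝ) : ∀ l : ℕ, 0 < l → iteratedDeriv l (fun _ : ℝ => c) = fun _ => 0 := by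
  intro l hl
  induction l with
  | zero => omega
  | succ l ih =>
    rw [iteratedDeriv_succ]
    rcases Nat.eq_zero_or_pos l with h0 | hpos
    · subst h0; funext y; simp
    · rw [ih hpos]; funext y; simp

instance pI_index_nonempty (i : ℕ) : Nonempty ({l : ℕ // l ≤ i} × Set.Icc (0 : ℝ) 1) :=
  ⟨⟨⟨0, Nat.zero_le _⟩, ⟨0, by norm_num⟩⟩⟩

lemma pI_le {F : ℝ → ℝ} {i : ℕ} {B : ℝ}
    (hB : ∀ l, l ≤ i → ∀ s ∈ Icc (0 : ℝ) 1, |iteratedDeriv l F s| ≤ B) : pI i F ≤ B :=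
  ciSup_le fun q => hB q.1.1 q.1.2 q.2.1 q.2.2

lemma bdd_range {F : ℝ → ℝ} (hF : ContDiff ℝ (⊤ : ℕ∞) F) (i : ℕ) :
    ∃ M, ∀ l, l ≤ i → ∀ s ∈ Icc (0 : ℝ) 1, |iteratedDeriv l F s| ≤ M := by
  induction i with
  | zero =>
    obtain ⟨M, hM⟩ := isCompact_Icc.exists_bound_of_continuousOn
      ((hF.continuous_iteratedDeriv 0 (by simp)).continuousOn (s := Icc (0:ℝ) 1))
    exact ⟨M, fun l hl s hs => by
      interval_cases l
      simpa [Real.norm_eq_abs] using hM s hs⟩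
  | succ i ih =>
    obtain ⟨M₁, hM₁⟩ := ih
    obtain ⟨M₂, hM₂⟩ := isCompact_Icc.exists_bound_of_continuousOn
      ((hF.continuous_iteratedDeriv (i + 1) (by exact_mod_cast le_top)).continuousOn (s := Icc (0:ℝ) 1))
    refine ⟨max M₁ M₂, fun l hl s hs => ?_⟩
    rcases Nat.lt_succ_iff_lt_or_eq.mp (Nat.lt_succ_of_le hl) with h | h
    · exact le_trans (hM₁ l (by omega) s hs) (le_max_left _ _)
    · subst h
      exact le_trans (by simpa [Real.norm_eq_abs] using hM₂ s hs) (le_max_right _ _)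

lemma le_pI {F : ℝ → ℝ} (hF : ContDiff ℝ (⊤ : ℕ∞) F) {i l : ℕ} (hl : l ≤ i) {s : ℝ}
    (hs : s ∈ Icc (0 : ℝ) 1) : |iteratedDeriv l F s| ≤ pI i F := by
  obtain ⟨M, hM⟩ := bdd_range hF i
  exact le_ciSup (f := fun q : {l : ℕ // l ≤ i} × Set.Icc (0 : ℝ) 1 =>
      |iteratedDeriv q.1.1 F q.2.1|)
    ⟨M, by rintro y ⟨q, rfl⟩; exact hM q.1.1 q.1.2 q.2.1 q.2.2⟩ ⟨⟨l, hl⟩, ⟨s, hs⟩⟩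

lemma pI_const {t : ℝ} (ht : 0 ≤ t) (i : ℕ) : pI i (fun _ => t) ≤ t := by
  refine pI_le fun l hl s hs => ?_
  rcases Nat.eq_zero_or_pos l with h0 | hpos
  · subst h0; simpa using (abs_of_nonneg ht).le
  · rw [itd_const_pos t l hpos]; simpa using ht

end Stmt7Aux

open Stmt7Aux

set_option maxHeartbeats 2000000 in
/-- Proposition 5 of the paper: Let `φ : ℝ → ℝ` be a smooth
diffeomorphism, `E = C^∞([0,1],ℝ)` with its Fréchet topology, and
`f : E → E`, `f x = φ ∘ x`, with Gateaux derivative `δf(x,u) = (φ' ∘ x) · u`.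
If `f` is almost M-tame at `x`, i.e. there are P-norms `ρ₁, ρ₂` for `E`
(nonnegative functions whose induced translation-invariant metrics define the
topology, expressed by their balls being bases of `𝓝 0`) such that
`ρ₁ z ≤ 1` implies `ρ₂ (δf(x+z,u) − δf(x,u)) ≤ ρ₁ u` for all `u ∈ E`,
then `φ'' t = 0` for every `t` in the range of `x` (on `[0,1]`). -/
theorem stmt7 [TopologicalSpace SmoothI]
    (hbp : (nhds (0 : SmoothI)).HasBasis (fun iε : ℕ × ℝ => 0 < iε.2)
      (fun iε => {u : SmoothI | pI iε.1 u.1 < iε.2}))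
    (φ : ℝ → ℝ) (hφ : ContDiff ℝ (⊤ : ℕ∞) φ)
    (hdiffeo : ∃ ψ : ℝ → ℝ, ContDiff ℝ (⊤ : ℕ∞) ψ ∧ LeftInverse ψ φ ∧ RightInverse ψ φ)
    (x : SmoothI)
    (ρ₁ ρ₂ : (ℝ → ℝ) → ℝ)
    (hρ₁0 : ∀ u, 0 ≤ ρ₁ u) (hρ₂0 : ∀ u, 0 ≤ ρ₂ u)
    (hb₁ : (nhds (0 : SmoothI)).HasBasis (fun ε : ℝ => 0 < ε)
      (fun ε => {u : SmoothI | ρ₁ u.1 < ε}))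
    (hb₂ : (nhds (0 : SmoothI)).HasBasis (fun ε : ℝ => 0 < ε)
      (fun ε => {u : SmoothI | ρ₂ u.1 < ε}))
    (htame : ∀ z u : SmoothI, ρ₁ z.1 ≤ 1 →
      ρ₂ (fun s => deriv φ (x.1 s + z.1 s) * u.1 s - deriv φ (x.1 s) * u.1 s) ≤ ρ₁ u.1) :
    ∀ s ∈ Set.Icc (0 : ℝ) 1, deriv (deriv φ) (x.1 s) = 0 := by
  intro s₀ hs₀
  by_contra hc
  have hx : ContDiff ℝ (⊤ : ℕ∞) x.1 := x.2
  have htop : (((⊤ : ℕ∞) : WithTop ℕ∞) + 1) = ((⊤ : ℕ∞) : WithTop ℕ∞) := rfl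
  have hφ' : ContDiff ℝ (⊤ : ℕ∞) (deriv φ) :=
    (contDiff_succ_iff_deriv.mp (htop ▸ hφ)).2.2
  have hφ'' : ContDiff ℝ (⊤ : ℕ∞) (deriv (deriv φ)) :=
    (contDiff_succ_iff_deriv.mp (htop ▸ hφ')).2.2
  set c := deriv (deriv φ) (x.1 s₀) with hcdef
  set ca := |c| with hcadef
  have hca : 0 < ca := abs_pos.mpr hc
  -- continuity of φ'' at x s₀
  obtain ⟨r, hr, hball⟩ : ∃ r > 0, ∀ y, dist y (x.1 s₀) < r →
      |deriv (deriv φ) y - c| < ca / 2 := by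
    obtain ⟨δ', hδ', H⟩ := Metric.continuousAt_iff.mp
      (hφ''.continuous.continuousAt (x := x.1 s₀)) (ca / 2) (by positivity)
    exact ⟨δ', hδ', fun y hy => by simpa [Real.dist_eq] using H hy⟩
  -- continuity of x at s₀
  obtain ⟨δJ, hδJ, hxcont⟩ : ∃ δJ > 0, ∀ τ, |τ - s₀| < δJ → |x.1 τ - x.1 s₀| < r / 2 := by
    obtain ⟨δ', hδ', H⟩ := Metric.continuousAt_iff.mp
      (hx.continuous.continuousAt (x := s₀)) (r / 2) (by positivity)
    exact ⟨δ', hδ', fun τ hτ => by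
      simpa [Real.dist_eq] using H (by simpa [Real.dist_eq] using hτ)⟩
  set ℓ := min δJ 1 / 2 with hℓdef
  have hℓpos : 0 < ℓ := by positivity
  have hℓδJ : ℓ < δJ := by
    rcases le_total δJ 1 with h' | h' <;> simp [hℓdef, min_eq_left, min_eq_right, h'] <;> linarith
  have hℓhalf : ℓ ≤ 1 / 2 := by
    have : min δJ 1 ≤ 1 := min_le_right _ _
    simp only [hℓdef]; linarith
  -- bases
  obtain ⟨⟨k₀, η⟩, hη, hsub1⟩ := hbp.mem_iff.mp (hb₁.mem_of_mem one_pos)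
  simp only at hη hsub1
  set k := max k₀ 1 with hkdef
  have hk0 : k₀ ≤ k := le_max_left _ _
  have hk1 : 1 ≤ k := le_max_right _ _
  obtain ⟨δ, hδpos, hsub2⟩ := hb₂.mem_iff.mp
    (hbp.mem_of_mem (i := ((k + 1 : ℕ), (1 : ℝ))) one_pos)
  obtain ⟨⟨k₂, η₂⟩, hη₂, hsub3⟩ := hbp.mem_iff.mp (hb₁.mem_of_mem hδpos)
  simp only at hη₂ hsub3
  set t := η₂ / 2 with htdef
  have ht : 0 < t := by positivity
  have hu : (fun _ : ℝ => t) ∈ SmoothI := show ContDiff ℝ (⊤ : ℕ∞) (fun _ : ℝ => t) from contDiff_const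
  have hρ₁u : ρ₁ (fun _ : ℝ => t) < δ := by
    have h1 : pI k₂ (fun _ : ℝ => t) < η₂ :=
      lt_of_le_of_lt (pI_const ht.le k₂) (by simp only [htdef]; linarith)
    exact hsub3 (show (⟨fun _ => t, hu⟩ : SmoothI) ∈ _ from h1)
  -- choose m
  have hπ : (0 : ℝ) < π := Real.pi_pos
  obtain ⟨m, hm1, hMQ0, hMr0, hMl0⟩ :
      ∃ m : ℕ, 1 ≤ m ∧ π ^ k / (t * ca * η * 2 ^ k) < (m : ℝ) ∧
        2 * η / r ≤ (m : ℝ) ∧ (2 * (k : ℝ) + 3) / (4 * ℓ) ≤ (m : ℝ) := by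
    set N : ℕ := max (max 1 (⌈π ^ k / (t * ca * η * 2 ^ k)⌉₊ + 1))
      (max ⌈2 * η / r⌉₊ ⌈(2 * (k : ℝ) + 3) / (4 * ℓ)⌉₊) with hNdef
    refine ⟨N, ?_, ?_, ?_, ?_⟩
    · exact le_trans (le_max_left _ _) (le_max_left _ _)
    · have h1 : ⌈π ^ k / (t * ca * η * 2 ^ k)⌉₊ + 1 ≤ N :=
        le_trans (le_max_right _ _) (le_max_left _ _)
      have h2 := Nat.le_ceil (π ^ k / (t * ca * η * 2 ^ k))
      have h3 : ((⌈π ^ k / (t * ca * η * 2 ^ k)⌉₊ + 1 : ℕ) : ℝ) ≤ (N : ℝ) := Nat.cast_le.mpr h1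
      push_cast at h3
      linarith
    · have h1 : ⌈2 * η / r⌉₊ ≤ N := le_trans (le_max_left _ _) (le_max_right _ _)
      have h3 : ((⌈2 * η / r⌉₊ : ℕ) : ℝ) ≤ (N : ℝ) := Nat.cast_le.mpr h1
      linarith [Nat.le_ceil (2 * η / r)]
    · have h1 : ⌈(2 * (k : ℝ) + 3) / (4 * ℓ)⌉₊ ≤ N :=
        le_trans (le_max_right _ _) (le_max_right _ _)
      have h3 : ((⌈(2 * (k : ℝ) + 3) / (4 * ℓ)⌉₊ : ℕ) : ℝ) ≤ (N : ℝ) := Nat.cast_le.mpr h1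
      linarith [Nat.le_ceil ((2 * (k : ℝ) + 3) / (4 * ℓ))]
  set M : ℝ := (m : ℝ) with hMdef
  have hM1 : (1 : ℝ) ≤ M := by rw [hMdef]; exact_mod_cast hm1
  have hMpos : 0 < M := by linarith
  have hMQ : π ^ k / (t * ca * η * 2 ^ k) < M := hMQ0
  have hMr : 2 * η / r ≤ M := hMr0
  have hMℓ : (2 * (k : ℝ) + 3) / (4 * ℓ) ≤ M := hMl0
  set b := 2 * π * M with hbdef
  have hbpos : 0 < b := by positivity
  have hb1 : 1 ≤ b := by
    have h1 : (1:ℝ) * 1 ≤ (2*π) * M :=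
      mul_le_mul (by linarith [Real.pi_gt_three]) hM1 zero_le_one (by linarith [Real.pi_gt_three])
    rw [hbdef]; linarith
  set a := η / (2 * b ^ k) with hadef
  have hbkpos : (0:ℝ) < b ^ k := pow_pos hbpos k
  have ha : 0 < a := div_pos hη (by linarith)
  set θ := -(b * s₀) with hθdef
  set z : ℝ → ℝ := fun s => a * Real.sin (b * s + θ) with hzdef
  have hzsm : ContDiff ℝ (⊤ : ℕ∞) z := smooth_sin_lin a b θ
  set h : ℝ := 1 / (2 * M) with hhdef
  have hh : 0 < h := div_pos one_pos (by linarith)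
  have hbh : b * h = π := by
    rw [hbdef, hhdef]
    field_simp [hMpos.ne']
  have hzabs : ∀ s, |z s| ≤ a := by
    intro s
    simp only [hzdef]
    rw [abs_mul, abs_of_pos ha]
    exact mul_le_of_le_one_right ha.le (Real.abs_sin_le_one _)
  have hzanti : ∀ s, z (s + h) = -z s := by
    intro s
    simp only [hzdef]
    have harg : b * (s + h) + θ = (b * s + θ) + π := by rw [← hbh]; ring
    rw [harg, Real.sin_add_pi]
    ring
  -- pI bound for z
  have hzpI : ∀ l, l ≤ k₀ → ∀ s' ∈ Icc (0:ℝ) 1, |iteratedDeriv l z s'| ≤ η / 2 := by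
    intro l hl s' _
    rw [hzdef, itd_sin_lin a b θ l]
    show |a * b ^ l * Real.sin (b * s' + θ + l * (π / 2))| ≤ η / 2
    have h1 : |a * b ^ l * Real.sin (b * s' + θ + l * (π / 2))| ≤ a * b ^ l := by
      rw [abs_mul, abs_of_pos (mul_pos ha (pow_pos hbpos l))]
      exact mul_le_of_le_one_right (mul_pos ha (pow_pos hbpos l)).le (Real.abs_sin_le_one _)
    have h2 : a * b ^ l ≤ a * b ^ k :=
      mul_le_mul_of_nonneg_left (pow_le_pow_right₀ hb1 (hl.trans hk0)) ha.le
    have h3 : a * b ^ k = η / 2 := by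
      rw [hadef]
      field_simp [hbkpos.ne']
    linarith
  have hzmem : z ∈ SmoothI := hzsm
  have hρ₁z : ρ₁ z ≤ 1 := by
    have h1 : (⟨z, hzmem⟩ : SmoothI) ∈ {u : SmoothI | pI k₀ u.1 < η} :=
      lt_of_le_of_lt (pI_le hzpI) (by linarith)
    exact le_of_lt (hsub1 h1)
  -- the tame function
  set G : ℝ → ℝ := fun s => deriv φ (x.1 s + z s) * t - deriv φ (x.1 s) * t with hGdef
  have hGsm : ContDiff ℝ (⊤ : ℕ∞) G :=
    ((hφ'.comp (hx.add hzsm)).mul contDiff_const).sub ((hφ'.comp hx).mul contDiff_const)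
  have hGmem : G ∈ SmoothI := hGsm
  have hρ₂G : ρ₂ G < δ :=
    lt_of_le_of_lt (htame ⟨z, hzmem⟩ ⟨fun _ => t, hu⟩ hρ₁z) hρ₁u
  have hmemG : (⟨G, hGmem⟩ : SmoothI) ∈ {u : SmoothI | ρ₂ u.1 < δ} := hρ₂G
  have hpIG : pI (k + 1) G < 1 := hsub2 hmemG
  have hGbound : ∀ τ ∈ Icc (0:ℝ) 1, |iteratedDeriv (k+1) G τ| ≤ 1 :=
    fun τ hτ => le_trans (le_pI hGsm le_rfl hτ) hpIG.le
  -- a ≤ r/4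
  have hπ3 : (3:ℝ) < π := Real.pi_gt_three
  have har : a ≤ r / 4 := by
    have hMb : M ≤ b := by
      have h1 : (1:ℝ) * M ≤ (2*π) * M :=
        mul_le_mul_of_nonneg_right (by linarith) hMpos.le
      rw [hbdef]; linarith
    have hbM : M ≤ b ^ k := le_trans hMb (le_self_pow₀ hb1 (by omega))
    have h1 : a ≤ η / (2 * M) := by
      rw [hadef, div_le_div_iff₀ (by linarith) (by linarith)]
      linarith [mul_le_mul_of_nonneg_left hbM hη.le]
    have h2 : η / (2 * M) ≤ r / 4 := by
      rw [div_le_div_iff₀ (by linarith) (by norm_num)]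
      have h3 := (div_le_iff₀ hr).mp hMr
      linarith
    linarith
  -- room
  have hroom : (2 * (k:ℝ) + 3) / (4 * M) ≤ ℓ := by
    rw [div_le_iff₀ (by linarith)]
    have h1 := (div_le_iff₀ (by linarith : (0:ℝ) < 4 * ℓ)).mp hMℓ
    linarith
  -- choose α and s*
  obtain ⟨α, sstar, hα0, hα1, hJ, hss1, hss2, hzs⟩ :
      ∃ α sstar : ℝ, 0 ≤ α ∧ α + ℓ ≤ 1 ∧ (∀ τ ∈ Icc α (α + ℓ), |τ - s₀| < δJ) ∧
        α ≤ sstar ∧ sstar + ((k:ℝ) + 1) * h ≤ α + ℓ ∧ |z sstar| = a := by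
    have h4M : (0:ℝ) < 1 / (4*M) := by positivity
    rcases le_or_gt s₀ (1/2) with hhalf | hhalf
    · refine ⟨s₀, s₀ + 1/(4*M), hs₀.1, by linarith, ?_, by linarith, ?_, ?_⟩
      · intro τ hτ
        rw [abs_lt]
        constructor <;> [linarith [hτ.1]; linarith [hτ.2]]
      · have he : 1/(4*M) + ((k:ℝ)+1) * h = (2*(k:ℝ)+3)/(4*M) := by
          rw [hhdef]; field_simp; ring
        linarith
      · have harg : b * (s₀ + 1/(4*M)) + θ = π/2 := by
          rw [hθdef, hbdef]; field_simp; ring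
        simp only [hzdef]
        rw [harg, Real.sin_pi_div_two, mul_one, abs_of_pos ha]
    · refine ⟨s₀ - ℓ, s₀ - (2*(k:ℝ)+3)/(4*M), by linarith, by linarith [hs₀.2], ?_, ?_, ?_, ?_⟩
      · intro τ hτ
        rw [abs_lt]
        constructor <;> [linarith [hτ.1]; linarith [hτ.2]]
      · linarith
      · have he : (2*(k:ℝ)+3)/(4*M) = 1/(4*M) + ((k:ℝ)+1) * h := by
          rw [hhdef]; field_simp; ring
        linarith
      · have harg : b * (s₀ - (2*(k:ℝ)+3)/(4*M)) + θ = -(π/2 + ((k:ℝ)+1) * π) := by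
          rw [hθdef, hbdef]; field_simp; ring
        simp only [hzdef]
        rw [harg, Real.sin_neg, abs_mul, abs_neg, abs_of_pos ha]
        rw [show ((k:ℝ)+1) = ((k+1 : ℕ):ℝ) by push_cast; ring, abs_sin_half_add (k+1), mul_one]
  -- E bound
  have hE : ∀ τ ∈ Icc α (α + ℓ), |G τ - t * c * z τ| ≤ t * (ca / 2) * a := by
    intro τ hτ
    have hxτ : |x.1 τ - x.1 s₀| < r / 2 := hxcont τ (hJ τ hτ)
    have hzτ : |z τ| ≤ a := hzabs τ
    have hFd : ∀ y : ℝ, HasDerivAt (fun y => deriv φ y - c * y) (deriv (deriv φ) y - c) y := by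
      intro y
      exact ((hφ'.differentiable (by simp) y).hasDerivAt).sub
        (by simpa using (hasDerivAt_id y).const_mul c)
    have hmvt := Convex.norm_image_sub_le_of_norm_deriv_le
      (f := fun y => deriv φ y - c * y) (s := Metric.closedBall (x.1 s₀) (3/4 * r)) (C := ca/2)
      (fun y _ => (hFd y).differentiableAt)
      (fun y hy => by
        rw [(hFd y).deriv]
        have hyr : dist y (x.1 s₀) < r := lt_of_le_of_lt (Metric.mem_closedBall.mp hy) (by linarith)
        simpa [Real.norm_eq_abs] using (hball y hyr).le)
      (convex_closedBall _ _) (x := x.1 τ) (y := x.1 τ + z τ)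
      (Metric.mem_closedBall.mpr (by rw [Real.dist_eq]; linarith))
      (Metric.mem_closedBall.mpr (by
        rw [Real.dist_eq]
        have h5 := abs_add_le (x.1 τ - x.1 s₀) (z τ)
        have heq : x.1 τ + z τ - x.1 s₀ = (x.1 τ - x.1 s₀) + z τ := by ring
        rw [heq]
        linarith))
    rw [Real.norm_eq_abs, Real.norm_eq_abs] at hmvt
    have heq1 : (deriv φ (x.1 τ + z τ) - c * (x.1 τ + z τ)) - (deriv φ (x.1 τ) - c * x.1 τ)
        = (deriv φ (x.1 τ + z τ) - deriv φ (x.1 τ)) - c * z τ := by ring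
    have heq2 : x.1 τ + z τ - x.1 τ = z τ := by ring
    rw [heq1, heq2] at hmvt
    have h3 : |(deriv φ (x.1 τ + z τ) - deriv φ (x.1 τ)) - c * z τ| ≤ ca/2 * a :=
      le_trans hmvt (mul_le_mul_of_nonneg_left hzτ (by linarith))
    have heq3 : G τ - t * c * z τ
        = t * ((deriv φ (x.1 τ + z τ) - deriv φ (x.1 τ)) - c * z τ) := by
      simp only [hGdef]; ring
    rw [heq3, abs_mul, abs_of_pos ht]
    calc t * |(deriv φ (x.1 τ + z τ) - deriv φ (x.1 τ)) - c * z τ| ≤ t * (ca/2 * a) :=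
          mul_le_mul_of_nonneg_left h3 ht.le
      _ = t * (ca/2) * a := by ring
  -- lower bound via finite differences
  have hsplit : G = fun s => t * c * z s + (G s - t * c * z s) := funext fun s => by ring
  have hAanti : ∀ s, t * c * z (s + h) = -(t * c * z s) := fun s => by rw [hzanti s]; ring
  have hDA := Dh_iter_antiper h (k+1) (fun s => t * c * z s) hAanti
  have hDadd := Dh_iter_add h (k+1) (fun s => t * c * z s) (fun s => G s - t * c * z s)
  have hDG : (Dh h)^[k+1] G sstar =
      (-2:ℝ)^(k+1) * (t * c * z sstar) + (Dh h)^[k+1] (fun s => G s - t * c * z s) sstar := by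
    conv_lhs => rw [hsplit]
    rw [hDadd, hDA]
  have hEb : |(Dh h)^[k+1] (fun s => G s - t * c * z s) sstar| ≤ 2^(k+1) * (t * (ca/2) * a) :=
    Dh_iter_bound h hh.le α (k+1) _ _ (α+ℓ) hE sstar hss1 (by push_cast; linarith)
  have hAbs : |(-2:ℝ)^(k+1) * (t * c * z sstar)| = 2^(k+1) * (t * ca * a) := by
    rw [abs_mul, abs_pow, abs_neg, abs_two, abs_mul, abs_mul, abs_of_pos ht, hzs]
    try ring
  have hlow : 2^(k+1) * (t * ca * a) / 2 ≤ |(Dh h)^[k+1] G sstar| := by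
    have h2 : (-2:ℝ)^(k+1) * (t * c * z sstar) =
        (Dh h)^[k+1] G sstar - (Dh h)^[k+1] (fun s => G s - t * c * z s) sstar := by
      rw [hDG]; ring
    have habs : |(-2:ℝ)^(k+1) * (t * c * z sstar)| ≤
        |(Dh h)^[k+1] G sstar| + |(Dh h)^[k+1] (fun s => G s - t * c * z s) sstar| := by
      rw [h2]; exact abs_sub _ _
    rw [hAbs] at habs
    have hcaa : (0:ℝ) < 2^(k+1) := by positivity
    linarith [hEb]
  have hup : |(Dh h)^[k+1] G sstar| ≤ h^(k+1) * 1 :=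
    Dh_iter_deriv_bound h hh.le 0 (k+1) G hGsm 1 1 hGbound sstar (le_trans hα0 hss1)
      (by push_cast; linarith)
  -- final algebra
  have hfin : t * ca * η * 2^k * M ≤ π^k := by
    have h0 : 2^(k+1) * (t * ca * a) / 2 ≤ h^(k+1) := by linarith
    have hLHS : 2^(k+1) * (t * ca * a) / 2 = t * ca * η * 2^k / (2 * b^k) := by
      rw [hadef, pow_succ]
      field_simp
    have hRHS : h^(k+1) = 1 / (2^(k+1) * M^(k+1)) := by
      rw [hhdef, div_pow, one_pow, mul_pow]
    rw [hLHS, hRHS] at h0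
    rw [div_le_div_iff₀ (by linarith) (by positivity)] at h0
    have hbk : b^k = 2^k * π^k * M^k := by
      rw [hbdef, mul_pow, mul_pow]
    have hC : (0:ℝ) < 2 * 2^k * M^k := by positivity
    apply le_of_mul_le_mul_right _ hC
    calc t * ca * η * 2^k * M * (2 * 2^k * M^k)
        = t * ca * η * 2^k * (2^(k+1) * M^(k+1)) := by rw [pow_succ, pow_succ]; ring
      _ ≤ 1 * (2 * b^k) := h0
      _ = π^k * (2 * 2^k * M^k) := by rw [hbk]; ring
  have hpos : (0:ℝ) < t * ca * η * 2^k :=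
    mul_pos (mul_pos (mul_pos ht hca) hη) (by positivity)
  have hQM := (div_lt_iff₀ hpos).mp hMQ
  linarith
end

section
/- Let E be the Fréchet space of smooth 1-periodic functions ℝ → ℝ, n a nonzero integer, φ : ℝ → ℝ smooth and 1-periodic, and U = { x ∈ E : inf_s |n + x'(s)| > 0 }. Define f : U → E by f(x)(s) = φ(ns + x(s)) · (n + x'(s)), with Gateaux derivative δf(x,u) = (φ' ∘ (ι+x)) · u · (n + x') + (φ ∘ (ι+x)) · u' where ι(s) = ns. If f is almost M-tame at some x ∈ U (i.e. there exist P-norms ‖·‖₁, ‖·‖₂ for E with ‖δf(x+z,u) − δf(x,u)‖₂ ≤ ‖u‖₁ whenever ‖z‖₁ ≤ 1), then φ is constant. -/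
open Real Set Function Filter

/-- The Fréchet space `E` of smooth `1`-periodic functions `ℝ → ℝ`. -/
def SmoothPer : Submodule ℝ (ℝ → ℝ) where
  carrier := {u | ContDiff ℝ (⊤ : ℕ∞) u ∧ Periodic u 1}
  add_mem' := fun hu hv => by
    simp only [Set.mem_setOf_eq] at *; exact ⟨hu.1.add hv.1, hu.2.add hv.2⟩
  zero_mem' := by
    simp only [Set.mem_setOf_eq]
    exact ⟨contDiff_const, fun t => rfl⟩
  smul_mem' := fun c u hu => by
    simp only [Set.mem_setOf_eq] at *
    exact ⟨hu.1.const_smul c, fun t => by simp [Pi.smul_apply, hu.2 t]⟩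

/-- The seminorms `p_i u = sup { |u^{(l)} s| : s ∈ ℝ, l ≤ i }`. -/
noncomputable def pPer (i : ℕ) (u : ℝ → ℝ) : ℝ :=
  ⨆ q : {l : ℕ // l ≤ i} × ℝ, |iteratedDeriv q.1.1 u q.2|

namespace Stmt8Aux

lemma contDiff_deriv {f : ℝ → ℝ} (hf : ContDiff ℝ (⊤ : ℕ∞) f) : ContDiff ℝ (⊤ : ℕ∞) (deriv f) := by
  have h : ContDiff ℝ (((⊤ : ℕ∞) : WithTop ℕ∞) + 1) f := hf.of_le (by exact_mod_cast le_top)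
  exact (contDiff_succ_iff_deriv.mp h).2.2

lemma periodic_deriv' {f : ℝ → ℝ} (hp : Periodic f 1) : Periodic (deriv f) 1 := by
  intro s
  have h1 : (fun y => f (y + 1)) = f := funext fun y => hp y
  calc deriv f (s + 1) = deriv (fun y => f (y + 1)) s := (deriv_comp_add_const f 1 s).symm
    _ = deriv f s := by rw [h1]

lemma periodic_iteratedDeriv {f : ℝ → ℝ} (hp : Periodic f 1) (m : ℕ) :
    Periodic (iteratedDeriv m f) 1 := by
  induction m with
  | zero => simpa [iteratedDeriv_zero] using hp
  | succ m ih => rw [iteratedDeriv_succ]; exact periodic_deriv' ih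

lemma periodic_bound {g : ℝ → ℝ} (hg : Continuous g) (hp : Periodic g 1) :
    ∃ C, ∀ s, |g s| ≤ C := by
  obtain ⟨C, hC⟩ :=
    (isCompact_Icc (a := (0:ℝ)) (b := 1)).exists_bound_of_continuousOn hg.continuousOn
  refine ⟨C, fun s => ?_⟩
  have h1 : g (s - (⌊s⌋ : ℝ) * 1) = g s := hp.sub_int_mul_eq ⌊s⌋
  have h2 : s - (⌊s⌋ : ℝ) * 1 ∈ Icc (0:ℝ) 1 := by
    rw [mul_one]; constructor
    · linarith [Int.floor_le s]
    · linarith [Int.lt_floor_add_one s]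
  have := hC _ h2
  rw [h1] at this
  simpa [Real.norm_eq_abs] using this

lemma exists_bound_iteratedDeriv {u : ℝ → ℝ} (hu : ContDiff ℝ (⊤ : ℕ∞) u) (hp : Periodic u 1) (i : ℕ) :
    ∃ C, ∀ l : ℕ, l ≤ i → ∀ s, |iteratedDeriv l u s| ≤ C := by
  induction i with
  | zero =>
    obtain ⟨C, hC⟩ := periodic_bound (hu.continuous_iteratedDeriv 0 (by simp))
      (periodic_iteratedDeriv hp 0)
    exact ⟨C, fun l hl s => by rw [Nat.le_zero.mp hl]; exact hC s⟩
  | succ i ih =>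
    obtain ⟨C₁, hC₁⟩ := ih
    obtain ⟨C₂, hC₂⟩ := periodic_bound (hu.continuous_iteratedDeriv (i+1) (by exact_mod_cast le_top))
      (periodic_iteratedDeriv hp (i+1))
    refine ⟨max C₁ C₂, fun l hl s => ?_⟩
    by_cases h : l ≤ i
    · exact le_trans (hC₁ l h s) (le_max_left _ _)
    · have he : l = i + 1 := le_antisymm hl (Nat.succ_le_of_lt (Nat.lt_of_not_le h))
      subst he
      exact le_trans (hC₂ s) (le_max_right _ _)

lemma bddAbove_family {u : ℝ → ℝ} (hu : ContDiff ℝ (⊤ : ℕ∞) u) (hp : Periodic u 1) (i : ℕ) :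
    BddAbove (Set.range fun q : {l : ℕ // l ≤ i} × ℝ => |iteratedDeriv q.1.1 u q.2|) := by
  obtain ⟨C, hC⟩ := exists_bound_iteratedDeriv hu hp i
  refine ⟨C, ?_⟩
  rintro y ⟨⟨⟨l, hl⟩, s⟩, rfl⟩
  exact hC l hl s

lemma abs_le_pPer {u : ℝ → ℝ} (hu : ContDiff ℝ (⊤ : ℕ∞) u) (hp : Periodic u 1) {i l : ℕ}
    (hl : l ≤ i) (s : ℝ) : |iteratedDeriv l u s| ≤ pPer i u :=
  le_ciSup (bddAbove_family hu hp i) (⟨⟨l, hl⟩, s⟩ : {l : ℕ // l ≤ i} × ℝ)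

lemma pPer_le {u : ℝ → ℝ} {i : ℕ} {C : ℝ}
    (h : ∀ l : ℕ, l ≤ i → ∀ s, |iteratedDeriv l u s| ≤ C) : pPer i u ≤ C := by
  have : Nonempty ({l : ℕ // l ≤ i} × ℝ) := ⟨⟨⟨0, Nat.zero_le _⟩, 0⟩⟩
  exact ciSup_le fun q => h q.1.1 q.1.2 q.2
  

lemma iteratedDeriv_sin_gen (ω : ℝ) :
    ∀ (l : ℕ) (a θ : ℝ), iteratedDeriv l (fun s => a * Real.sin (ω * s + θ)) =
      fun s => a * ω ^ l * Real.sin (ω * s + (θ + l * (π / 2))) := by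
  intro l
  induction l with
  | zero => intro a θ; funext s; simp
  | succ l ih =>
    intro a θ
    have hder : deriv (fun s => a * Real.sin (ω * s + θ)) =
        fun s => (a * ω) * Real.sin (ω * s + (θ + π / 2)) := by
      funext s
      have h1 : HasDerivAt (fun s : ℝ => ω * s + θ) ω s := by
        simpa using (((hasDerivAt_id s).const_mul ω).add_const θ)
      have h2 : HasDerivAt (fun s : ℝ => a * Real.sin (ω * s + θ))
          (a * (Real.cos (ω * s + θ) * ω)) s := (h1.sin).const_mul a
      rw [h2.deriv, ← Real.sin_add_pi_div_two (ω * s + θ)]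
      ring_nf
    rw [iteratedDeriv_succ', hder, ih (a * ω) (θ + π / 2)]
    funext s
    have harg : ω * s + (θ + π / 2 + (l : ℝ) * (π / 2)) =
        ω * s + (θ + ((l : ℕ) + 1 : ℕ) * (π / 2)) := by push_cast; ring
    rw [harg]
    ring

lemma iteratedDeriv_zero_fun : ∀ m : ℕ, iteratedDeriv m (fun _ : ℝ => (0:ℝ)) = fun _ => 0 := by
  intro m
  induction m with
  | zero => simp
  | succ m ih => rw [iteratedDeriv_succ', deriv_const']; exact ih

lemma iteratedDeriv_const_fun (c : ℝ) (m : ℕ) (hm : m ≠ 0) :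
    iteratedDeriv m (fun _ : ℝ => c) = fun _ => 0 := by
  obtain ⟨m, rfl⟩ := Nat.exists_eq_succ_of_ne_zero hm
  rw [iteratedDeriv_succ', deriv_const']
  exact iteratedDeriv_zero_fun m

lemma itd_shift_sub (h : ℝ) :
    ∀ (m : ℕ) (F : ℝ → ℝ), ContDiff ℝ (⊤ : ℕ∞) F →
      iteratedDeriv m (fun s => F (s + h) - F s) =
        fun s => iteratedDeriv m F (s + h) - iteratedDeriv m F s := by
  intro m
  induction m with
  | zero => intro F _; simp
  | succ m ih =>
    intro F hF
    have hder : deriv (fun s => F (s + h) - F s) = fun s => deriv F (s + h) - deriv F s := by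
      funext s
      have h1 : HasDerivAt (fun y : ℝ => F (y + h)) (deriv F (s + h) * 1) s :=
        HasDerivAt.comp s ((hF.differentiable (by simp) (s + h)).hasDerivAt)
          ((hasDerivAt_id s).add_const h)
      have h2 := (hF.differentiable (by simp) s).hasDerivAt
      have := (h1.sub h2).deriv
      exact this.trans (by ring)
    rw [iteratedDeriv_succ', hder, ih (deriv F) (contDiff_deriv hF)]
    funext s
    rw [iteratedDeriv_succ']

lemma abs_sub_le_of_abs_deriv_le {f : ℝ → ℝ} (hf : Differentiable ℝ f) {M : ℝ}
    (hM : ∀ s, |deriv f s| ≤ M) (a b : ℝ) : |f b - f a| ≤ M * |b - a| := by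
  have h0 : 0 ≤ M := le_trans (abs_nonneg _) (hM a)
  have hlip : LipschitzWith ⟨M, h0⟩ f := by
    apply lipschitzWith_of_nnnorm_deriv_le hf
    intro x
    exact NNReal.coe_le_coe.mp (show ((‖deriv f x‖₊ : NNReal) : ℝ) ≤ M by simpa [Real.norm_eq_abs] using hM x)
  have : dist (f b) (f a) ≤ M * dist b a := hlip.dist_le_mul b a
  simpa [Real.dist_eq] using this


def FD (h : ℝ) : ℕ → (ℝ → ℝ) → (ℝ → ℝ)
  | 0, f => f
  | (m+1), f => FD h m (fun s => f (s + h) - f s)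

lemma FD_congr (h : ℝ) : ∀ (m : ℕ) (p q : ℝ → ℝ), p = q → FD h m p = FD h m q :=
  fun _ _ _ hpq => by rw [hpq]

lemma FD_sub (h : ℝ) : ∀ (m : ℕ) (p q : ℝ → ℝ),
    FD h m (fun s => p s - q s) = fun s => FD h m p s - FD h m q s := by
  intro m
  induction m with
  | zero => intro p q; rfl
  | succ m ih =>
    intro p q
    show FD h m _ = _
    rw [FD_congr h m _ (fun s => (p (s + h) - p s) - (q (s + h) - q s)) (by funext s; ring),
      ih (fun s => p (s + h) - p s) (fun s => q (s + h) - q s)]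
    rfl

lemma FD_window_bound {h : ℝ} (hh : 0 ≤ h) :
    ∀ (m : ℕ) (g : ℝ → ℝ) (C : ℝ) (s : ℝ),
      (∀ τ, s ≤ τ → τ ≤ s + m * h → |g τ| ≤ C) → |FD h m g s| ≤ 2 ^ m * C := by
  intro m
  induction m with
  | zero => intro g C s hg; simpa [FD] using hg s le_rfl (by simp)
  | succ m ih =>
    intro g C s hg
    have key : ∀ τ, s ≤ τ → τ ≤ s + m * h → |(fun s => g (s + h) - g s) τ| ≤ 2 * C := by
      intro τ h1 h2
      have e1 : |g (τ + h)| ≤ C := hg (τ + h) (by linarith) (by push_cast; linarith)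
      have e2 : |g τ| ≤ C := hg τ h1 (by push_cast; linarith)
      calc |g (τ + h) - g τ| ≤ |g (τ + h)| + |g τ| := abs_sub _ _
        _ ≤ 2 * C := by linarith
    have := ih (fun s => g (s + h) - g s) (2 * C) s key
    calc |FD h (m+1) g s| = |FD h m (fun s => g (s + h) - g s) s| := rfl
      _ ≤ 2 ^ m * (2 * C) := this
      _ = 2 ^ (m+1) * C := by ring

lemma FD_sin {h ω : ℝ} (hωh : ω * h = π) :
    ∀ (m : ℕ) (A : ℝ), FD h m (fun s => A * Real.sin (ω * s)) =
      fun s => (-2 : ℝ) ^ m * A * Real.sin (ω * s) := by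
  intro m
  induction m with
  | zero => intro A; funext s; show A * Real.sin (ω * s) = _; simp
  | succ m ih =>
    intro A
    have hin : (fun s => A * Real.sin (ω * (s + h)) - A * Real.sin (ω * s)) =
        fun s => (-2 * A) * Real.sin (ω * s) := by
      funext s
      have : ω * (s + h) = ω * s + π := by rw [mul_add, hωh]
      rw [this, Real.sin_add_pi]
      ring
    show FD h m _ = _
    rw [FD_congr h m _ _ hin, ih (-2 * A)]
    funext s
    ring

lemma FD_deriv_le {h : ℝ} (hh : 0 ≤ h) :
    ∀ (m : ℕ) (F : ℝ → ℝ) (M : ℝ), ContDiff ℝ (⊤ : ℕ∞) F →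
      (∀ s, |iteratedDeriv m F s| ≤ M) → ∀ s, |FD h m F s| ≤ M * h ^ m := by
  intro m
  induction m with
  | zero => intro F M _ hM s; simpa [FD] using hM s
  | succ m ih =>
    intro F M hF hM s
    have hdiff : Differentiable ℝ (iteratedDeriv m F) :=
      hF.differentiable_iteratedDeriv m (by exact_mod_cast lt_top_iff_ne_top.mpr (by simp))
    have hder : ∀ τ, |deriv (iteratedDeriv m F) τ| ≤ M := by
      intro τ
      have : deriv (iteratedDeriv m F) τ = iteratedDeriv (m+1) F τ := by
        rw [iteratedDeriv_succ]
      rw [this]; exact hM τ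
    have hG : ContDiff ℝ (⊤ : ℕ∞) (fun s => F (s + h) - F s) := by
      have h1 : ContDiff ℝ (⊤ : ℕ∞) (fun s : ℝ => F (s + h)) :=
        hF.comp (contDiff_id.add contDiff_const)
      exact h1.sub hF
    have hGbound : ∀ τ, |iteratedDeriv m (fun s => F (s + h) - F s) τ| ≤ M * h := by
      intro τ
      rw [itd_shift_sub h m F hF]
      have := abs_sub_le_of_abs_deriv_le hdiff hder τ (τ + h)
      simpa [abs_of_nonneg hh] using this
    have := ih (fun s => F (s + h) - F s) (M * h) hG hGbound s
    calc |FD h (m+1) F s| = |FD h m (fun s => F (s + h) - F s) s| := rfl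
      _ ≤ M * h * h ^ m := this
      _ = M * h ^ (m+1) := by ring


lemma itd_const_mul {g : ℝ → ℝ} (hg : ContDiff ℝ (⊤ : ℕ∞) g) (c : ℝ) (m : ℕ) (s : ℝ) :
    iteratedDeriv m (fun y => c * g y) s = c * iteratedDeriv m g s := by
  rw [← iteratedDerivWithin_univ, ← iteratedDerivWithin_univ]
  exact iteratedDerivWithin_const_mul (Set.mem_univ s) uniqueDiffOn_univ c
    ((hg.of_le (by exact_mod_cast le_top)).contDiffWithinAt)

lemma surj_aux_pos {n : ℤ} (hn : 0 < n) {g : ℝ → ℝ} (hg : Continuous g) {C : ℝ}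
    (hC : ∀ s, |g s| ≤ C) : Surjective (fun s => (n:ℝ) * s + g s) := by
  have hn1 : (1:ℝ) ≤ (n:ℝ) := by exact_mod_cast hn
  have hcont : Continuous (fun s => (n:ℝ) * s + g s) :=
    (continuous_const.mul continuous_id).add hg
  have h1 : Tendsto (fun s => (n:ℝ) * s + g s) atTop atTop := by
    apply tendsto_atTop_mono' atTop (show (fun s => s - C) ≤ᶠ[atTop] _ from ?_)
    · simpa [sub_eq_add_neg] using tendsto_atTop_add_const_right atTop (-C) tendsto_id
    · filter_upwards [eventually_ge_atTop (0:ℝ)] with s hs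
      have := (abs_le.mp (hC s)).1
      nlinarith
  have h2 : Tendsto (fun s => (n:ℝ) * s + g s) atBot atBot := by
    apply tendsto_atBot_mono' atBot (show _ ≤ᶠ[atBot] (fun s => s + C) from ?_)
    · exact tendsto_atBot_add_const_right atBot C tendsto_id
    · filter_upwards [eventually_le_atBot (0:ℝ)] with s hs
      have := (abs_le.mp (hC s)).2
      nlinarith
  exact hcont.surjective h1 h2

lemma surj_aux {n : ℤ} (hn : n ≠ 0) {g : ℝ → ℝ} (hg : Continuous g) {C : ℝ}
    (hC : ∀ s, |g s| ≤ C) : Surjective (fun s => (n:ℝ) * s + g s) := by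
  rcases hn.lt_or_gt with hneg | hpos
  · have hs := surj_aux_pos (n := -n) (by omega) (hg.comp continuous_neg)
      (C := C) (fun s => hC (-s))
    intro b
    obtain ⟨s, hs'⟩ := hs b
    refine ⟨-s, ?_⟩
    simp only [Function.comp] at hs' ⊢
    push_cast at hs' ⊢
    linarith [hs']
  · exact surj_aux_pos hpos hg hC

end Stmt8Aux


set_option maxHeartbeats 2000000 in
/-- Proposition 3 of the paper: Let `E` be the Fréchet space of
smooth `1`-periodic functions with its topology given by the seminorms `p_i`,
`n ≠ 0` an integer, `φ` smooth `1`-periodic, and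
`f x : s ↦ φ(ns + x s) · (n + x' s)` on `U = {x | inf_s |n + x' s| > 0}`, with
Gateaux derivative `δf(x,u) = (φ' ∘ (ι+x)) · u · (n + x') + (φ ∘ (ι+x)) · u'`.
If `f` is almost M-tame at some `x ∈ U` — there are P-norms `ρ₁, ρ₂` for `E`
(nonnegative, with balls forming bases of `𝓝 0`, i.e. the induced
translation-invariant metrics define the topology) such that `ρ₁ z ≤ 1` implies
`x + z ∈ U` and `ρ₂ (δf(x+z,u) − δf(x,u)) ≤ ρ₁ u` for all `u ∈ E` — then `φ`
is constant. -/
theorem stmt8 [TopologicalSpace SmoothPer]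
    (hbp : (nhds (0 : SmoothPer)).HasBasis (fun iε : ℕ × ℝ => 0 < iε.2)
      (fun iε => {u : SmoothPer | pPer iε.1 u.1 < iε.2}))
    (n : ℤ) (hn : n ≠ 0)
    (φ : ℝ → ℝ) (hφ : ContDiff ℝ (⊤ : ℕ∞) φ) (hφp : Periodic φ 1)
    (x : SmoothPer)
    (hxU : ∃ c > 0, ∀ s : ℝ, c ≤ |(n : ℝ) + deriv x.1 s|)
    (ρ₁ ρ₂ : (ℝ → ℝ) → ℝ)
    (hρ₁0 : ∀ u, 0 ≤ ρ₁ u) (hρ₂0 : ∀ u, 0 ≤ ρ₂ u)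
    (hb₁ : (nhds (0 : SmoothPer)).HasBasis (fun ε : ℝ => 0 < ε)
      (fun ε => {u : SmoothPer | ρ₁ u.1 < ε}))
    (hb₂ : (nhds (0 : SmoothPer)).HasBasis (fun ε : ℝ => 0 < ε)
      (fun ε => {u : SmoothPer | ρ₂ u.1 < ε}))
    (htame : ∀ z : SmoothPer, ρ₁ z.1 ≤ 1 →
      (∃ c > 0, ∀ s : ℝ, c ≤ |(n : ℝ) + (deriv x.1 s + deriv z.1 s)|) ∧
      ∀ u : SmoothPer,
        ρ₂ (fun s =>
          (deriv φ ((n : ℝ) * s + (x.1 s + z.1 s)) * u.1 s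
              * ((n : ℝ) + (deriv x.1 s + deriv z.1 s))
            + φ ((n : ℝ) * s + (x.1 s + z.1 s)) * deriv u.1 s)
          - (deriv φ ((n : ℝ) * s + x.1 s) * u.1 s * ((n : ℝ) + deriv x.1 s)
            + φ ((n : ℝ) * s + x.1 s) * deriv u.1 s)) ≤ ρ₁ u.1) :
    ∀ t t' : ℝ, φ t = φ t' := by
  classical
  have hdiffφ : Differentiable ℝ φ := hφ.differentiable (by simp)
  suffices hzero : ∀ τ, deriv φ τ = 0 by
    intro t t'
    exact is_const_of_deriv_eq_zero hdiffφ hzero t t'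
  intro τ₀
  by_contra hd0
  set d := deriv φ τ₀ with hd_def
  have hdpos : 0 < |d| := abs_pos.mpr hd0
  obtain ⟨⟨i₀, ε₀⟩, hε₀, hsub₀⟩ := hbp.mem_iff.mp (hb₁.mem_of_mem one_pos)
  replace hε₀ : 0 < ε₀ := hε₀
  obtain ⟨δ₂, hδ₂, hsub₂⟩ := hb₂.mem_iff.mp
    (hbp.mem_of_mem (i := ((i₀, (1:ℝ)) : ℕ × ℝ)) one_pos)
  obtain ⟨⟨i₃, ε₃⟩, hε₃, hsub₃⟩ := hbp.mem_iff.mp (hb₁.mem_of_mem hδ₂)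
  replace hε₃ : 0 < ε₃ := hε₃
  set c : ℝ := ε₃ / 2 with hc_def
  have hcpos : 0 < c := by positivity
  set uc : SmoothPer := ⟨fun _ => c, contDiff_const, fun _ => rfl⟩ with huc_def
  have hpuc : pPer i₃ (uc.1) < ε₃ := by
    have hb : ∀ l : ℕ, l ≤ i₃ → ∀ s : ℝ, |iteratedDeriv l (fun _ : ℝ => c) s| ≤ c := by
      intro l _ s
      rcases Nat.eq_zero_or_pos l with rfl | hl0
      · simp [abs_of_pos hcpos]
      · rw [Stmt8Aux.iteratedDeriv_const_fun c l (Nat.pos_iff_ne_zero.mp hl0)]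
        simp [le_of_lt hcpos]
    exact lt_of_le_of_lt (Stmt8Aux.pPer_le hb) (by rw [hc_def]; linarith)
  have hρuc : ρ₁ (uc.1) < δ₂ := hsub₃ hpuc
  have hx_sm : ContDiff ℝ (⊤ : ℕ∞) (x.1) := x.2.1
  have hx_per : Periodic (x.1) 1 := x.2.2
  set t : ℝ → ℝ := fun s => (n:ℝ) * s + x.1 s with ht_def
  have hxd : ∀ s, HasDerivAt (x.1) (deriv (x.1) s) s :=
    fun s => ((hx_sm.differentiable (by simp)) s).hasDerivAt
  have hlin : ∀ s : ℝ, HasDerivAt (fun s : ℝ => (n:ℝ) * s) (n:ℝ) s := by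
    intro s; simpa using (hasDerivAt_id s).const_mul (n:ℝ)
  have htd : ∀ s, HasDerivAt t ((n:ℝ) + deriv (x.1) s) s := fun s => (hlin s).add (hxd s)
  obtain ⟨L, hL⟩ := Stmt8Aux.periodic_bound (g := fun s => (n:ℝ) + deriv (x.1) s)
    (continuous_const.add (Stmt8Aux.contDiff_deriv hx_sm).continuous)
    (fun s => by simp [Stmt8Aux.periodic_deriv' hx_per s])
  have hL0 : 0 ≤ L := le_trans (abs_nonneg _) (hL 0)
  have htdiff : Differentiable ℝ t := fun s => (htd s).differentiableAt
  have htlip : ∀ p q : ℝ, |t q - t p| ≤ L * |q - p| := by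
    intro p q
    exact Stmt8Aux.abs_sub_le_of_abs_deriv_le htdiff
      (fun s => by rw [(htd s).deriv]; exact hL s) p q
  obtain ⟨Cx, hCx⟩ := Stmt8Aux.periodic_bound hx_sm.continuous hx_per
  obtain ⟨s₀, hs₀⟩ := Stmt8Aux.surj_aux hn hx_sm.continuous hCx τ₀
  have hcontφ' : Continuous (deriv φ) := (Stmt8Aux.contDiff_deriv hφ).continuous
  obtain ⟨r, hrpos, hr⟩ : ∃ r > 0, ∀ ξ : ℝ, |ξ - τ₀| ≤ r → |deriv φ ξ - d| ≤ |d| / 2 := by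
    obtain ⟨δ, hδ, hδ'⟩ := Metric.continuousAt_iff.mp hcontφ'.continuousAt (|d|/2) (by positivity)
    refine ⟨δ/2, by positivity, fun ξ hξ => ?_⟩
    have h1 : dist ξ τ₀ < δ := by rw [Real.dist_eq]; linarith
    have h2 := hδ' h1
    rw [Real.dist_eq] at h2
    exact le_of_lt h2
  set ε' : ℝ := min (ε₀ / 2) (r / 2) with hε'_def
  have hε'pos : 0 < ε' := lt_min (by positivity) (by positivity)
  set N : ℕ := i₀ + 1 with hN_def
  set M : ℝ := 1 / c with hM_def
  have hMpos : 0 < M := by positivity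
  obtain ⟨k, hk⟩ := exists_nat_gt
    (max (max 1 (2 * L * ((N:ℝ) + 2) / r)) (M * π ^ i₀ / (2 ^ i₀ * |d| * ε')))
  have hk1 : (1:ℝ) < (k:ℝ) := lt_of_le_of_lt (le_trans (le_max_left _ _) (le_max_left _ _)) hk
  have hk0 : (0:ℝ) < (k:ℝ) := by linarith
  set ω : ℝ := 2 * π * k with hω_def
  have hωpos : 0 < ω := by positivity
  have hω1 : 1 ≤ ω := by nlinarith [Real.pi_gt_three]
  set a : ℝ := ε' / ω ^ i₀ with ha_def
  have hωipos : 0 < ω ^ i₀ := pow_pos hωpos i₀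
  have hapos : 0 < a := by positivity
  have haε' : a ≤ ε' := by
    rw [ha_def]
    exact div_le_self (le_of_lt hε'pos) (one_le_pow₀ hω1)
  have hz_sm : ContDiff ℝ (⊤ : ℕ∞) (fun s : ℝ => a * Real.sin (ω * s)) :=
    contDiff_const.mul (Real.contDiff_sin.comp (contDiff_const.mul contDiff_id))
  have hz_per : Periodic (fun s : ℝ => a * Real.sin (ω * s)) 1 := by
    intro s
    have harg : ω * (s + 1) = ω * s + (k:ℤ) * (2 * π) := by rw [hω_def]; push_cast; ring
    show a * Real.sin (ω * (s + 1)) = a * Real.sin (ω * s)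
    rw [harg, Real.sin_add_int_mul_two_pi]
  set z : SmoothPer := ⟨fun s => a * Real.sin (ω * s), hz_sm, hz_per⟩ with hz_def
  have hzval : ∀ τ, z.1 τ = a * Real.sin (ω * τ) := fun τ => rfl
  have hz_per1 : Periodic (z.1 : ℝ → ℝ) 1 := hz_per
  have haz : ∀ τ, |z.1 τ| ≤ a := by
    intro τ
    rw [hzval τ, abs_mul, abs_of_pos hapos]
    nlinarith [Real.abs_sin_le_one (ω * τ), abs_nonneg (Real.sin (ω * τ))]
  have hz_itd : ∀ l : ℕ, l ≤ i₀ → ∀ s, |iteratedDeriv l (z.1) s| ≤ ε' := by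
    intro l hl s
    have hfun : (z.1 : ℝ → ℝ) = fun s => a * Real.sin (ω * s + 0) := by
      funext s; rw [add_zero]
    rw [hfun, Stmt8Aux.iteratedDeriv_sin_gen ω l a 0]
    have h1 : |a * ω ^ l * Real.sin (ω * s + (0 + l * (π/2)))| ≤ a * ω ^ l := by
      rw [abs_mul]
      have hs1 : |Real.sin (ω * s + (0 + l * (π/2)))| ≤ 1 := Real.abs_sin_le_one _
      have hs2 : |a * ω ^ l| = a * ω ^ l := abs_of_pos (by positivity)
      nlinarith [abs_nonneg (a * ω ^ l)]
    have h2 : a * ω ^ l ≤ a * ω ^ i₀ :=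
      mul_le_mul_of_nonneg_left (pow_le_pow_right₀ hω1 hl) (le_of_lt hapos)
    have h3 : a * ω ^ i₀ = ε' := by rw [ha_def]; field_simp
    linarith
  have hzball : pPer i₀ (z.1) < ε₀ := by
    refine lt_of_le_of_lt (Stmt8Aux.pPer_le hz_itd) ?_
    have h4 := min_le_left (ε₀ / 2) (r / 2)
    rw [← hε'_def] at h4
    linarith
  have hρz : ρ₁ (z.1) ≤ 1 := le_of_lt (hsub₀ hzball)
  obtain ⟨-, htame2⟩ := htame z hρz
  have hρE := htame2 uc
  set F : ℝ → ℝ := fun s => φ ((n:ℝ) * s + (x.1 s + z.1 s)) - φ ((n:ℝ) * s + x.1 s) with hF_def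
  have hF_sm : ContDiff ℝ (⊤ : ℕ∞) F := by
    have hin1 : ContDiff ℝ (⊤ : ℕ∞) (fun s : ℝ => (n:ℝ)*s + (x.1 s + z.1 s)) :=
      (contDiff_const.mul contDiff_id).add (hx_sm.add hz_sm)
    have hin2 : ContDiff ℝ (⊤ : ℕ∞) (fun s : ℝ => (n:ℝ)*s + x.1 s) :=
      (contDiff_const.mul contDiff_id).add hx_sm
    exact (hφ.comp hin1).sub (hφ.comp hin2)
  have hφint : ∀ y : ℝ, φ (y + (n:ℝ) * 1) = φ y := hφp.int_mul n
  have hF_per : Periodic F 1 := by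
    intro s
    have e1 : (n:ℝ)*(s+1) + (x.1 (s+1) + z.1 (s+1)) =
        ((n:ℝ)*s + (x.1 s + z.1 s)) + (n:ℝ)*1 := by
      rw [hx_per s, hz_per1 s]; ring
    have e2 : (n:ℝ)*(s+1) + x.1 (s+1) = ((n:ℝ)*s + x.1 s) + (n:ℝ)*1 := by
      rw [hx_per s]; ring
    show φ _ - φ _ = φ _ - φ _
    rw [e1, e2, hφint, hφint]
  have hzd : ∀ s, HasDerivAt (z.1) (deriv (z.1) s) s :=
    fun s => ((hz_sm.differentiable (by simp)) s).hasDerivAt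
  have hFd : ∀ s, HasDerivAt F
      (deriv φ ((n:ℝ)*s + (x.1 s + z.1 s)) * ((n:ℝ) + (deriv (x.1) s + deriv (z.1) s))
        - deriv φ ((n:ℝ)*s + x.1 s) * ((n:ℝ) + deriv (x.1) s)) s := by
    intro s
    have hin1 : HasDerivAt (fun s : ℝ => (n:ℝ)*s + (x.1 s + z.1 s))
        ((n:ℝ) + (deriv (x.1) s + deriv (z.1) s)) s := (hlin s).add ((hxd s).add (hzd s))
    have hin2 : HasDerivAt (fun s : ℝ => (n:ℝ)*s + x.1 s)
        ((n:ℝ) + deriv (x.1) s) s := (hlin s).add (hxd s)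
    have h1 : HasDerivAt (fun s : ℝ => φ ((n:ℝ)*s + (x.1 s + z.1 s)))
        (deriv φ ((n:ℝ)*s + (x.1 s + z.1 s)) * ((n:ℝ) + (deriv (x.1) s + deriv (z.1) s))) s :=
      ((hdiffφ _).hasDerivAt).comp s hin1
    have h2 : HasDerivAt (fun s : ℝ => φ ((n:ℝ)*s + x.1 s))
        (deriv φ ((n:ℝ)*s + x.1 s) * ((n:ℝ) + deriv (x.1) s)) s :=
      ((hdiffφ _).hasDerivAt).comp s hin2
    exact h1.sub h2
  have hEeq : (fun s =>
        (deriv φ ((n : ℝ) * s + (x.1 s + z.1 s)) * uc.1 s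
            * ((n : ℝ) + (deriv x.1 s + deriv z.1 s))
          + φ ((n : ℝ) * s + (x.1 s + z.1 s)) * deriv uc.1 s)
        - (deriv φ ((n : ℝ) * s + x.1 s) * uc.1 s * ((n : ℝ) + deriv x.1 s)
          + φ ((n : ℝ) * s + x.1 s) * deriv uc.1 s)) = fun s => c * deriv F s := by
    funext s
    have hdc : deriv (uc.1) s = 0 := by
      show deriv (fun _ : ℝ => c) s = 0; simp
    have hucs : uc.1 s = c := rfl
    rw [(hFd s).deriv, hdc, hucs]
    ring
  rw [hEeq] at hρE
  have hρw : ρ₂ (fun s => c * deriv F s) < δ₂ := lt_of_le_of_lt hρE hρuc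
  have hw_sm : ContDiff ℝ (⊤ : ℕ∞) (fun s => c * deriv F s) :=
    contDiff_const.mul (Stmt8Aux.contDiff_deriv hF_sm)
  have hw_per : Periodic (fun s => c * deriv F s) 1 := by
    intro s
    show c * deriv F (s + 1) = c * deriv F s
    rw [Stmt8Aux.periodic_deriv' hF_per s]
  set w : SmoothPer := ⟨fun s => c * deriv F s, hw_sm, hw_per⟩ with hw_def
  have hwp : pPer i₀ (w.1) < 1 := hsub₂ (show w ∈ {u : SmoothPer | ρ₂ u.1 < δ₂} from hρw)
  have hFbound : ∀ s, |iteratedDeriv N F s| ≤ M := by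
    intro s
    have h1 : |iteratedDeriv i₀ (w.1) s| ≤ pPer i₀ (w.1) :=
      Stmt8Aux.abs_le_pPer hw_sm hw_per le_rfl s
    have h2 : iteratedDeriv i₀ (w.1) s = c * iteratedDeriv i₀ (deriv F) s :=
      Stmt8Aux.itd_const_mul (Stmt8Aux.contDiff_deriv hF_sm) c i₀ s
    have h3 : iteratedDeriv i₀ (deriv F) s = iteratedDeriv N F s := by
      rw [hN_def, iteratedDeriv_succ']
    have h4 : c * |iteratedDeriv N F s| < 1 := by
      have h5 := lt_of_le_of_lt h1 hwp
      rwa [h2, h3, abs_mul, abs_of_pos hcpos] at h5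
    rw [hM_def, le_div_iff₀ hcpos]
    linarith [mul_comm c |iteratedDeriv N F s|]
  -- finite differences
  set hstep : ℝ := 1 / (2 * (k:ℝ)) with hh_def
  have hhpos : 0 < hstep := by positivity
  have hhnn : 0 ≤ hstep := le_of_lt hhpos
  have hωh : ω * hstep = π := by
    rw [hω_def, hh_def]; field_simp
  set m₀ : ℤ := ⌈(k:ℝ) * s₀⌉ with hm₀_def
  set sstar : ℝ := ((m₀:ℝ) + 1/4) / k with hsstar_def
  have hceil1 : (k:ℝ) * s₀ ≤ (m₀:ℝ) := Int.le_ceil _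
  have hceil2 : (m₀:ℝ) < (k:ℝ) * s₀ + 1 := Int.ceil_lt_add_one _
  have hsin1 : Real.sin (ω * sstar) = 1 := by
    have harg : ω * sstar = π/2 + (m₀:ℝ) * (2*π) := by
      rw [hω_def, hsstar_def]; field_simp; ring
    rw [harg, Real.sin_add_int_mul_two_pi, Real.sin_pi_div_two]
  have hsstar_ge : s₀ ≤ sstar := by
    rw [hsstar_def, le_div_iff₀ hk0]
    nlinarith
  have hsstar_le : sstar ≤ s₀ + 2 / k := by
    rw [hsstar_def, div_le_iff₀ hk0]
    have h6 : (s₀ + 2 / k) * k = s₀ * k + 2 := by field_simp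
    rw [h6]
    nlinarith
  have hLk : L * (((N:ℝ) + 2) / k) ≤ r / 2 := by
    have hkgt : 2 * L * ((N:ℝ) + 2) / r < k :=
      lt_of_le_of_lt (le_trans (le_max_right _ _) (le_max_left _ _)) hk
    rw [div_lt_iff₀ hrpos] at hkgt
    rw [← mul_div_assoc, div_le_iff₀ hk0]
    nlinarith
  have hwindow : ∀ τ : ℝ, sstar ≤ τ → τ ≤ sstar + (N:ℝ) * hstep →
      |t τ - τ₀| ≤ r / 2 := by
    intro τ h1 h2
    have hτs₀ : |τ - s₀| ≤ ((N:ℝ) + 2) / k := by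
      rw [abs_of_nonneg (by linarith)]
      have h3 : (N:ℝ) * hstep ≤ (N:ℝ) / k := by
        rw [hh_def, mul_one_div, div_le_div_iff₀ (by linarith : (0:ℝ) < 2*(k:ℝ)) hk0]
        nlinarith [Nat.cast_nonneg (α := ℝ) N]
      have h5 : 2 / (k:ℝ) + (N:ℝ) / k = ((N:ℝ) + 2) / k := by ring
      linarith
    rw [← hs₀]
    calc |t τ - t s₀| ≤ L * |τ - s₀| := htlip s₀ τ
      _ ≤ L * (((N:ℝ) + 2) / k) := mul_le_mul_of_nonneg_left hτs₀ hL0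
      _ ≤ r / 2 := hLk
  -- error estimate on the window
  have hψlip : ∀ p q : ℝ, |p - τ₀| ≤ r → |q - τ₀| ≤ r →
      |(φ p - d * p) - (φ q - d * q)| ≤ |d|/2 * |p - q| := by
    intro p q hp hq
    have hψdiff : ∀ y ∈ Metric.closedBall τ₀ r, DifferentiableAt ℝ (fun y => φ y - d * y) y :=
      fun y _ => (hdiffφ y).sub (differentiableAt_id.const_mul d)
    have hψderiv : ∀ y : ℝ, deriv (fun y => φ y - d * y) y = deriv φ y - d := by
      intro y
      have h1 : HasDerivAt (fun y : ℝ => d * y) d y := by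
        simpa using (hasDerivAt_id y).const_mul d
      exact ((hdiffφ y).hasDerivAt.sub h1).deriv
    have hψbound : ∀ y ∈ Metric.closedBall τ₀ r, ‖deriv (fun y => φ y - d * y) y‖ ≤ |d|/2 := by
      intro y hy
      rw [Real.norm_eq_abs, hψderiv y]
      exact hr y (by rwa [Metric.mem_closedBall, Real.dist_eq] at hy)
    have := Convex.norm_image_sub_le_of_norm_deriv_le hψdiff hψbound (convex_closedBall τ₀ r)
      (show q ∈ Metric.closedBall τ₀ r by rwa [Metric.mem_closedBall, Real.dist_eq])
      (show p ∈ Metric.closedBall τ₀ r by rwa [Metric.mem_closedBall, Real.dist_eq])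
    simpa [Real.norm_eq_abs] using this
  have herr : ∀ τ : ℝ, sstar ≤ τ → τ ≤ sstar + (N:ℝ) * hstep →
      |(fun s => F s - (d * a) * Real.sin (ω * s)) τ| ≤ |d|/2 * a := by
    intro τ h1 h2
    have hw1 := hwindow τ h1 h2
    have hw2 : |z.1 τ| ≤ r / 2 := by
      have h7 := min_le_right (ε₀ / 2) (r / 2)
      rw [← hε'_def] at h7
      linarith [haz τ]
    have hp : |(t τ + z.1 τ) - τ₀| ≤ r := by
      have : (t τ + z.1 τ) - τ₀ = (t τ - τ₀) + z.1 τ := by ring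
      rw [this]
      calc |(t τ - τ₀) + z.1 τ| ≤ |t τ - τ₀| + |z.1 τ| := abs_add_le _ _
        _ ≤ r := by linarith
    have hq : |t τ - τ₀| ≤ r := by linarith
    have hFτ : F τ - (d * a) * Real.sin (ω * τ) =
        (φ (t τ + z.1 τ) - d * (t τ + z.1 τ)) - (φ (t τ) - d * (t τ)) := by
      have e3 : (n:ℝ)*τ + (x.1 τ + z.1 τ) = t τ + z.1 τ := by rw [ht_def]; ring
      have e4 : (n:ℝ)*τ + x.1 τ = t τ := by rw [ht_def]
      show φ ((n:ℝ)*τ + (x.1 τ + z.1 τ)) - φ ((n:ℝ)*τ + x.1 τ) - (d * a) * Real.sin (ω * τ) = _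
      rw [e3, e4, hzval τ]
      ring
    have h8 := hψlip (t τ + z.1 τ) (t τ) hp hq
    have h9 : |(t τ + z.1 τ) - t τ| = |z.1 τ| := by rw [add_sub_cancel_left]
    rw [h9] at h8
    have h10 : |d|/2 * |z.1 τ| ≤ |d|/2 * a :=
      mul_le_mul_of_nonneg_left (haz τ) (by positivity)
    show |F τ - (d * a) * Real.sin (ω * τ)| ≤ |d|/2 * a
    rw [hFτ]
    linarith
  -- finite difference bounds
  have hFDmain : Stmt8Aux.FD hstep N (fun s => (d * a) * Real.sin (ω * s)) sstar =
      (-2:ℝ)^N * (d * a) := by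
    rw [Stmt8Aux.FD_sin hωh N (d * a)]
    show (-2:ℝ)^N * (d * a) * Real.sin (ω * sstar) = (-2:ℝ)^N * (d * a)
    rw [hsin1, mul_one]
  have hFDerr : |Stmt8Aux.FD hstep N (fun s => F s - (d * a) * Real.sin (ω * s)) sstar| ≤
      2^N * (|d|/2 * a) :=
    Stmt8Aux.FD_window_bound hhnn N _ _ sstar herr
  have hFDsub := Stmt8Aux.FD_sub hstep N F (fun s => (d * a) * Real.sin (ω * s))
  have hFDF : |Stmt8Aux.FD hstep N F sstar| ≤ M * hstep ^ N :=
    Stmt8Aux.FD_deriv_le hhnn N F M hF_sm hFbound sstar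
  have key : 2^i₀ * |d| * a ≤ M * hstep ^ N := by
    have e5 : |Stmt8Aux.FD hstep N F sstar -
        Stmt8Aux.FD hstep N (fun s => (d * a) * Real.sin (ω * s)) sstar| ≤ 2^N * (|d|/2 * a) := by
      have := congrFun hFDsub sstar
      rw [← this]
      exact hFDerr
    have e6 : |Stmt8Aux.FD hstep N (fun s => (d * a) * Real.sin (ω * s)) sstar| =
        2^N * (|d| * a) := by
      rw [hFDmain, abs_mul, abs_mul, abs_pow, abs_neg, abs_two, abs_of_pos hapos]
    have e7 : 2^N * (|d| * a) ≤ |Stmt8Aux.FD hstep N F sstar| +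
        |Stmt8Aux.FD hstep N F sstar -
          Stmt8Aux.FD hstep N (fun s => (d * a) * Real.sin (ω * s)) sstar| := by
      have e8 : (2:ℝ)^N * (|d| * a) = |Stmt8Aux.FD hstep N F sstar -
          (Stmt8Aux.FD hstep N F sstar -
            Stmt8Aux.FD hstep N (fun s => (d * a) * Real.sin (ω * s)) sstar)| := by
        rw [← e6]; congr 1; ring
      rw [e8]
      exact abs_sub _ _
    have e9 : (2:ℝ)^N = 2^i₀ * 2 := by rw [hN_def, pow_succ]
    rw [e9] at e7 e5
    linarith
  -- final contradiction
  set P : ℝ := 2 * k with hP_def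
  have hPpos : 0 < P := by positivity
  have hωP : ω = π * P := by rw [hω_def, hP_def]; ring
  have hstepP : hstep = 1 / P := by rw [hh_def, hP_def]
  have key2 : 2^i₀ * |d| * ε' * P ≤ M * π^i₀ := by
    have hPN : hstep ^ N = 1 / (P^i₀ * P) := by
      rw [hstepP, div_pow, one_pow, hN_def, pow_succ]
    have hai : a = ε' / (π^i₀ * P^i₀) := by rw [ha_def, hωP, mul_pow]
    rw [hai, hPN] at key
    rw [← mul_div_assoc, mul_one_div] at key
    have hd1 : (0:ℝ) < π^i₀ * P^i₀ := by positivity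
    have hd2 : (0:ℝ) < P^i₀ * P := by positivity
    have h1 := (div_le_div_iff₀ hd1 hd2).mp key
    have h3 : (2^i₀ * |d| * ε' * P) * P^i₀ ≤ (M * π^i₀) * P^i₀ := by
      calc (2^i₀ * |d| * ε' * P) * P^i₀ = 2 ^ i₀ * |d| * ε' * (P ^ i₀ * P) := by ring
        _ ≤ M * (π ^ i₀ * P ^ i₀) := h1
        _ = (M * π^i₀) * P^i₀ := by ring
    exact le_of_mul_le_mul_right h3 (pow_pos hPpos i₀)
  have hklt : M * π^i₀ / (2^i₀ * |d| * ε') < k := lt_of_le_of_lt (le_max_right _ _) hk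
  have hPle : P ≤ M * π^i₀ / (2^i₀ * |d| * ε') := by
    rw [le_div_iff₀ (by positivity)]
    calc P * (2^i₀ * |d| * ε') = 2^i₀ * |d| * ε' * P := by ring
      _ ≤ M * π^i₀ := key2
  have : (k:ℝ) ≤ P := by rw [hP_def]; linarith
  linarith
end
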